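/- arXiv:2305.17380 — 12 statements merged into one kernel-verified Lean document; each statement's English description precedes it below -/
import Mathlib

section
/- Let T be a positive integer, L > 0 and C ≥ 0 be reals. Let u_1,…,u_T ∈ (0,1] and C_1,…,C_T ∈ [0,2L] be reals with Σ_{t=1}^T C_t ≤ C. For each t let y_t be the unique integer j ≥ 0 with u_t ∈ (2^{-j-1}, 2^{-j}], let z_t = #{τ ≤ t : y_τ = y_t}, and define the amortized bonus b_t = (4L/u_t) if z_t ≤ ⌈C/(2L)⌉ and b_t = 0 otherwise. Then Σ_{t=1}^T C_t/u_t ≤ Σ_{t=1}^T b_t. -/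
open Finset

lemma rank_card_ge {α : Type*} [LinearOrder α] (S : Finset α) (m : ℕ) (hm : m ≤ S.card) :
    m ≤ (S.filter fun t => (S.filter (· ≤ t)).card ≤ m).card := by
  classical
  set e := S.orderIsoOfFin rfl with he
  have key : ∀ i : Fin S.card, (S.filter (· ≤ (e i : α))).card ≤ (i : ℕ) + 1 := by
    intro i
    have hsub : S.filter (· ≤ (e i : α)) ⊆ (Finset.Iic i).image (fun k => (e k : α)) := by
      intro s hs
      rw [mem_filter] at hs
      obtain ⟨hsS, hle⟩ := hs
      refine mem_image.2 ⟨e.symm ⟨s, hsS⟩, ?_, by simp⟩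
      rw [Finset.mem_Iic]
      have : (⟨s, hsS⟩ : S) ≤ e i := hle
      simpa using e.symm.monotone this
    calc (S.filter (· ≤ (e i : α))).card ≤ ((Finset.Iic i).image (fun k => (e k : α))).card :=
          Finset.card_le_card hsub
      _ ≤ (Finset.Iic i).card := Finset.card_image_le
      _ = (i : ℕ) + 1 := Fin.card_Iic i
  have hinj : Function.Injective (fun i : Fin m => (e (Fin.castLE hm i) : α)) := by
    intro a b hab
    have := e.injective (Subtype.ext hab)
    exact Fin.castLE_injective hm this
  have hsub : (Finset.univ : Finset (Fin m)).image (fun i => (e (Fin.castLE hm i) : α)) ⊆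
      S.filter fun t => (S.filter (· ≤ t)).card ≤ m := by
    intro t ht
    obtain ⟨i, _, rfl⟩ := mem_image.1 ht
    refine mem_filter.2 ⟨(e _).2, ?_⟩
    calc (S.filter (· ≤ (e (Fin.castLE hm i) : α))).card ≤ (i : ℕ) + 1 := key _
      _ ≤ m := i.2
  calc m = ((Finset.univ : Finset (Fin m)).image (fun i => (e (Fin.castLE hm i) : α))).card := by
        rw [Finset.card_image_of_injective _ hinj, card_univ, Fintype.card_fin]
    _ ≤ _ := Finset.card_le_card hsub

/-- **Amortized bonus lemma, first claim (Lemma 3.1 (i)).**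
Let `T` be a positive integer, `L > 0`, `C ≥ 0`, `u_t ∈ (0,1]`,
`C_t ∈ [0, 2L]` with `Σ_t C_t ≤ C`.  For each `t`, `y t` is the unique
integer `j ≥ 0` with `u t ∈ (2^{-j-1}, 2^{-j}]`, `z t` counts how many
`τ ≤ t` fall into the same dyadic bin as `t`, and the amortized bonus is
`b t = 4L / u t` if `z t ≤ ⌈C/(2L)⌉` and `0` otherwise.  Then
`Σ_t C_t / u_t ≤ Σ_t b_t`. -/
theorem amortized_bonus_dominates
    (T : ℕ) (hT : 0 < T) (L C : ℝ) (hL : 0 < L) (hC : 0 ≤ C)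
    (u : Fin T → ℝ) (hu : ∀ t, u t ∈ Set.Ioc (0 : ℝ) 1)
    (Ct : Fin T → ℝ) (hCt : ∀ t, Ct t ∈ Set.Icc (0 : ℝ) (2 * L))
    (hCsum : ∑ t, Ct t ≤ C)
    (y : Fin T → ℕ)
    (hy : ∀ t, u t ∈ Set.Ioc ((2 : ℝ) ^ (-(y t : ℤ) - 1)) ((2 : ℝ) ^ (-(y t : ℤ))))
    (z : Fin T → ℕ)
    (hz : ∀ t, z t = (Finset.univ.filter (fun τ : Fin T => τ ≤ t ∧ y τ = y t)).card)
    (b : Fin T → ℝ)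
    (hb : ∀ t, b t = if z t ≤ Nat.ceil (C / (2 * L)) then 4 * L / u t else 0) :
    ∑ t, Ct t / u t ≤ ∑ t, b t := by
  classical
  set m := Nat.ceil (C / (2 * L)) with hm
  have hb_nonneg : ∀ t, 0 ≤ b t := by
    intro t
    rw [hb t]
    split
    · exact div_nonneg (by positivity) (hu t).1.le
    · exact le_refl _
  rw [← Finset.sum_fiberwise_of_maps_to (g := y) (t := Finset.univ.image y)
      (fun t _ => Finset.mem_image_of_mem y (mem_univ t)) (fun t => Ct t / u t),
    ← Finset.sum_fiberwise_of_maps_to (g := y) (t := Finset.univ.image y)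
      (fun t _ => Finset.mem_image_of_mem y (mem_univ t)) b]
  apply Finset.sum_le_sum
  intro j _
  set S := Finset.univ.filter (fun t => y t = j) with hS
  have hyS : ∀ t ∈ S, y t = j := fun t ht => (mem_filter.1 ht).2
  have hzS : ∀ t ∈ S, z t = (S.filter (· ≤ t)).card := by
    intro t ht
    rw [hz t, hyS t ht]
    congr 1
    rw [hS, Finset.filter_filter]
    apply Finset.filter_congr
    intro τ _
    simp [and_comm]
  by_cases hcard : S.card ≤ m
  · -- termwise bound
    apply Finset.sum_le_sum
    intro t ht
    have hzle : z t ≤ m := by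
      rw [hzS t ht]
      exact le_trans (Finset.card_le_card (Finset.filter_subset _ _)) hcard
    rw [hb t, if_pos hzle]
    have hu0 := (hu t).1
    exact (div_le_div_iff_of_pos_right hu0).2 (le_trans (hCt t).2 (by nlinarith))
  · push_neg at hcard
    have hmle : m ≤ S.card := hcard.le
    -- cost ≤ 2^(j+1) * C ≤ bonus
    set p : ℝ := (2 : ℝ) ^ ((j : ℤ) + 1) with hp
    have hppos : (0:ℝ) < p := by positivity
    have hcost : ∑ t ∈ S, Ct t / u t ≤ p * C := by
      have h1 : ∀ t ∈ S, Ct t / u t ≤ Ct t * p := by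
        intro t ht
        have hu0 := (hu t).1
        rw [div_le_iff₀ hu0]
        have hlow : (2:ℝ) ^ (-(j:ℤ) - 1) < u t := by
          have := (hy t).1; rwa [hyS t ht] at this
        have hCt0 := (hCt t).1
        have hcancel : p * (2:ℝ) ^ (-(j:ℤ) - 1) = 1 := by
          rw [hp, ← zpow_add₀ (two_ne_zero : (2:ℝ) ≠ 0)]
          norm_num
        calc Ct t = Ct t * p * (2:ℝ) ^ (-(j:ℤ) - 1) := by
              rw [mul_assoc, hcancel, mul_one]
          _ ≤ Ct t * p * u t := by
              apply mul_le_mul_of_nonneg_left hlow.le (by positivity)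
      calc ∑ t ∈ S, Ct t / u t ≤ ∑ t ∈ S, Ct t * p := Finset.sum_le_sum h1
        _ = (∑ t ∈ S, Ct t) * p := by rw [← Finset.sum_mul]
        _ ≤ C * p := by
            apply mul_le_mul_of_nonneg_right ?_ hppos.le
            refine le_trans ?_ hCsum
            exact Finset.sum_le_sum_of_subset_of_nonneg (Finset.subset_univ S)
              (fun t _ _ => (hCt t).1)
        _ = p * C := mul_comm _ _
    have hbonus : p * C ≤ ∑ t ∈ S, b t := by
      set A := S.filter (fun t => z t ≤ m) with hA
      have hAcard : m ≤ A.card := by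
        have heq : A = S.filter (fun t => (S.filter (· ≤ t)).card ≤ m) := by
          apply Finset.filter_congr
          intro t ht
          rw [hzS t ht]
        rw [heq]
        exact rank_card_ge S m hmle
      have hterm : ∀ t ∈ A, 4 * L * (2:ℝ) ^ (j : ℤ) ≤ b t := by
        intro t ht
        have htS := Finset.mem_filter.1 ht
        rw [hb t, if_pos htS.2]
        have hu0 := (hu t).1
        have hup : u t ≤ (2:ℝ) ^ (-(j:ℤ)) := by
          have := (hy t).2; rwa [hyS t htS.1] at this
        rw [le_div_iff₀ hu0]
        calc 4 * L * (2:ℝ) ^ (j:ℤ) * u t ≤ 4 * L * (2:ℝ) ^ (j:ℤ) * (2:ℝ) ^ (-(j:ℤ)) := by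
              apply mul_le_mul_of_nonneg_left hup (by positivity)
          _ = 4 * L := by
              rw [mul_assoc, ← zpow_add₀ (two_ne_zero : (2:ℝ) ≠ 0)]
              simp
      calc p * C ≤ (m : ℝ) * (4 * L * (2:ℝ) ^ (j:ℤ)) := by
            have hceil : C / (2 * L) ≤ (m : ℝ) := Nat.le_ceil _
            have : C ≤ (m : ℝ) * (2 * L) := by
              rw [div_le_iff₀ (by positivity)] at hceil
              exact hceil
            calc p * C ≤ p * ((m:ℝ) * (2 * L)) := mul_le_mul_of_nonneg_left this hppos.le
              _ = (m : ℝ) * (4 * L * (2:ℝ) ^ (j:ℤ)) := by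
                  rw [hp, zpow_add₀ (two_ne_zero : (2:ℝ) ≠ 0)]
                  ring
        _ ≤ (A.card : ℝ) * (4 * L * (2:ℝ) ^ (j:ℤ)) := by
            apply mul_le_mul_of_nonneg_right (by exact_mod_cast hAcard) (by positivity)
        _ = ∑ t ∈ A, 4 * L * (2:ℝ) ^ (j:ℤ) := by rw [Finset.sum_const, nsmul_eq_mul]
        _ ≤ ∑ t ∈ A, b t := Finset.sum_le_sum hterm
        _ ≤ ∑ t ∈ S, b t := Finset.sum_le_sum_of_subset_of_nonneg
            (Finset.filter_subset _ _) (fun t _ _ => hb_nonneg t)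
    exact hcost.trans hbonus
end

section
/- Let T be a positive integer, L > 0, C ≥ 0 and u_min ∈ (0,1] be reals. Let u_1,…,u_T ∈ [u_min, 1] be reals. For each t let y_t be the unique integer j ≥ 0 with u_t ∈ (2^{-j-1}, 2^{-j}], let z_t = #{τ ≤ t : y_τ = y_t}, and define the amortized bonus b_t = (4L/u_t) if z_t ≤ ⌈C/(2L)⌉ and b_t = 0 otherwise. Then for any reals q_1,…,q_T with 0 ≤ q_t ≤ u_t for all t, one has Σ_{t=1}^T q_t·b_t ≤ 4L·⌈C/(2L)⌉·(⌊log₂(1/u_min)⌋ + 1). -/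
/-- **Amortized bonus lemma, second claim (Lemma 3.1 (ii)).**
Let `T` be a positive integer, `L > 0`, `C ≥ 0`, `u_min ∈ (0,1]` and
`u_t ∈ [u_min, 1]`.  For each `t`, `y t` is the unique integer `j ≥ 0` with
`u t ∈ (2^{-j-1}, 2^{-j}]`, `z t` counts how many `τ ≤ t` fall into the same
dyadic bin as `t`, and the amortized bonus is `b t = 4L / u t` if
`z t ≤ ⌈C/(2L)⌉` and `0` otherwise.  Then for any weights `0 ≤ q_t ≤ u_t`,
`Σ_t q_t · b_t ≤ 4L · ⌈C/(2L)⌉ · (⌊log₂(1/u_min)⌋ + 1)`. -/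
theorem amortized_bonus_total
    (T : ℕ) (hT : 0 < T) (L C umin : ℝ) (hL : 0 < L) (hC : 0 ≤ C)
    (humin : umin ∈ Set.Ioc (0 : ℝ) 1)
    (u : Fin T → ℝ) (hu : ∀ t, u t ∈ Set.Icc umin 1)
    (y : Fin T → ℕ)
    (hy : ∀ t, u t ∈ Set.Ioc ((2 : ℝ) ^ (-(y t : ℤ) - 1)) ((2 : ℝ) ^ (-(y t : ℤ))))
    (z : Fin T → ℕ)
    (hz : ∀ t, z t = (Finset.univ.filter (fun τ : Fin T => τ ≤ t ∧ y τ = y t)).card)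
    (b : Fin T → ℝ)
    (hb : ∀ t, b t = if z t ≤ Nat.ceil (C / (2 * L)) then 4 * L / u t else 0)
    (q : Fin T → ℝ) (hq : ∀ t, 0 ≤ q t ∧ q t ≤ u t) :
    ∑ t, q t * b t ≤
      4 * L * (Nat.ceil (C / (2 * L)) : ℝ) * ((Nat.floor (Real.logb 2 (1 / umin)) : ℝ) + 1) := by
  set N := Nat.ceil (C / (2 * L)) with hN
  set M := Nat.floor (Real.logb 2 (1 / umin)) with hM
  have humin0 : (0:ℝ) < umin := humin.1
  have hupos : ∀ t, 0 < u t := fun t => lt_of_lt_of_le humin0 (hu t).1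
  set S := Finset.univ.filter (fun t : Fin T => z t ≤ N) with hS
  -- pointwise bound
  have hbound : ∀ t, q t * b t ≤ if t ∈ S then 4 * L else 0 := by
    intro t
    rw [hb t]
    by_cases h : z t ≤ N
    · have htS : t ∈ S := by simp [hS, h]
      simp only [h, if_pos, htS]
      have h1 : q t * (4 * L / u t) ≤ u t * (4 * L / u t) :=
        mul_le_mul_of_nonneg_right (hq t).2
          (div_nonneg (by positivity) (hupos t).le)
      calc q t * (4 * L / u t) ≤ u t * (4 * L / u t) := h1
        _ = 4 * L := by
            rw [mul_comm, div_mul_cancel₀ _ (hupos t).ne']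
    · have htS : t ∉ S := by simp [hS, h]
      simp [h, htS]
  -- rank is at least one
  have hz1 : ∀ t, 1 ≤ z t := by
    intro t
    rw [hz t]
    have : t ∈ Finset.univ.filter (fun τ : Fin T => τ ≤ t ∧ y τ = y t) := by
      simp
    exact Finset.card_pos.mpr ⟨t, this⟩
  -- bin index bound
  have hyM : ∀ t, y t ≤ M := by
    intro t
    have h1 : umin ≤ (2:ℝ) ^ (-(y t : ℤ)) := le_trans (hu t).1 (hy t).2
    have h2 : (2:ℝ) ^ (y t : ℕ) ≤ 1 / umin := by
      rw [le_div_iff₀ humin0]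
      have : (2:ℝ) ^ (-(y t : ℤ)) = ((2:ℝ) ^ (y t : ℕ))⁻¹ := by
        rw [zpow_neg, zpow_natCast]
      rw [this] at h1
      calc (2:ℝ) ^ (y t : ℕ) * umin ≤ (2:ℝ) ^ (y t : ℕ) * ((2:ℝ) ^ (y t : ℕ))⁻¹ :=
            mul_le_mul_of_nonneg_left h1 (by positivity)
        _ = 1 := by field_simp
    have h3 : ((y t : ℕ) : ℝ) ≤ Real.logb 2 (1 / umin) := by
      rw [Real.le_logb_iff_rpow_le (by norm_num) (by positivity)]
      rwa [Real.rpow_natCast]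
    exact Nat.le_floor h3
  -- injectivity of t ↦ (y t, z t)
  have key : ∀ s t : Fin T, s < t → y s = y t → z s ≠ z t := by
    intro s t hlt hys
    have hsub : Finset.univ.filter (fun τ : Fin T => τ ≤ s ∧ y τ = y s) ⊂
        Finset.univ.filter (fun τ : Fin T => τ ≤ t ∧ y τ = y t) := by
      constructor
      · intro τ hτ
        simp only [Finset.mem_filter, Finset.mem_univ, true_and] at hτ ⊢
        exact ⟨le_trans hτ.1 hlt.le, hτ.2.trans hys⟩
      · intro hcon
        have : t ∈ Finset.univ.filter (fun τ : Fin T => τ ≤ s ∧ y τ = y s) :=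
          hcon (by simp)
        simp only [Finset.mem_filter, Finset.mem_univ, true_and] at this
        exact absurd this.1 (not_le.mpr hlt)
    have := Finset.card_lt_card hsub
    rw [← hz s, ← hz t] at this
    omega
  have hinj : Set.InjOn (fun t => (y t, z t)) (S : Set (Fin T)) := by
    intro s _ t _ hst
    have hys : y s = y t := congrArg Prod.fst hst
    have hzs : z s = z t := congrArg Prod.snd hst
    rcases lt_trichotomy s t with h | h | h
    · exact absurd hzs (key s t h hys)
    · exact h
    · exact absurd hzs.symm (key t s h hys.symm)
  -- cardinality bound
  have hcard : S.card ≤ (M + 1) * N := by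
    have himg : S.image (fun t => (y t, z t)) ⊆
        Finset.range (M + 1) ×ˢ Finset.Icc 1 N := by
      intro p hp
      simp only [Finset.mem_image] at hp
      obtain ⟨t, htS, rfl⟩ := hp
      have hzt : z t ≤ N := (Finset.mem_filter.mp htS).2
      simp only [Finset.mem_product, Finset.mem_range, Finset.mem_Icc]
      exact ⟨Nat.lt_succ_of_le (hyM t), hz1 t, hzt⟩
    calc S.card = (S.image (fun t => (y t, z t))).card :=
          (Finset.card_image_of_injOn hinj).symm
      _ ≤ (Finset.range (M + 1) ×ˢ Finset.Icc 1 N).card := Finset.card_le_card himg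
      _ = (M + 1) * N := by
          rw [Finset.card_product, Finset.card_range, Nat.card_Icc, Nat.add_sub_cancel]
  calc ∑ t, q t * b t ≤ ∑ t, (if t ∈ S then 4 * L else 0) :=
        Finset.sum_le_sum fun t _ => hbound t
    _ = S.card * (4 * L) := by
        rw [Finset.sum_ite_mem, Finset.univ_inter, Finset.sum_const, nsmul_eq_mul]
    _ ≤ ((M + 1) * N : ℕ) * (4 * L) := by
        apply mul_le_mul_of_nonneg_right _ (by positivity)
        exact_mod_cast hcard
    _ = 4 * L * (N : ℝ) * ((M : ℝ) + 1) := by push_cast; ring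
end

section
/- Let L > 0 and D > 0 be reals, and let ν_0, ν_1, ν_2, … be reals with 0 ≤ D·ν_t ≤ L² for all t. Define a sequence (γ_t) by choosing γ_0 ≥ L and setting γ_{t+1} = γ_t + D·ν_t/(2γ_t). Then γ_t ≥ L > 0 for all t (so the recursion is well defined), and for every t ≥ 0 one has γ_t ≤ √(D·Σ_{j=0}^{t-1} ν_j) + γ_0. -/
/-- **Learning-rate growth bound (Proposition D.3).**
Let `L > 0`, `D > 0` and `ν_t` with `0 ≤ D·ν_t ≤ L²`.  If `γ₀ ≥ L` and
`γ_{t+1} = γ_t + D·ν_t / (2γ_t)`, then `γ_t ≥ L > 0` for all `t`, and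
`γ_t ≤ √(D · Σ_{j<t} ν_j) + γ₀` for every `t`. -/
theorem learning_rate_growth
    (L D : ℝ) (hL : 0 < L) (hD : 0 < D)
    (ν : ℕ → ℝ) (hν : ∀ t, 0 ≤ D * ν t ∧ D * ν t ≤ L ^ 2)
    (γ : ℕ → ℝ) (hγ0 : L ≤ γ 0)
    (hrec : ∀ t, γ (t + 1) = γ t + D * ν t / (2 * γ t)) :
    (∀ t, L ≤ γ t) ∧
      (∀ t, γ t ≤ Real.sqrt (D * ∑ j ∈ Finset.range t, ν j) + γ 0) := by
  have hlow : ∀ t, L ≤ γ t := by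
    intro t
    induction t with
    | zero => exact hγ0
    | succ n ih =>
      have hpos : 0 < γ n := lt_of_lt_of_le hL ih
      have : 0 ≤ D * ν n / (2 * γ n) :=
        div_nonneg (hν n).1 (by linarith)
      rw [hrec n]; linarith
  refine ⟨hlow, ?_⟩
  have hmono : ∀ t, γ 0 ≤ γ t := by
    intro t
    induction t with
    | zero => exact le_refl _
    | succ n ih =>
      have hpos : 0 < γ n := lt_of_lt_of_le hL (hlow n)
      have : 0 ≤ D * ν n / (2 * γ n) :=
        div_nonneg (hν n).1 (by linarith)
      rw [hrec n]; linarith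
  have key : ∀ t, (γ t - γ 0) ^ 2 ≤ D * ∑ j ∈ Finset.range t, ν j := by
    intro t
    induction t with
    | zero => simp
    | succ n ih =>
      have hpos : 0 < γ n := lt_of_lt_of_le hL (hlow n)
      rw [Finset.sum_range_succ, hrec n]
      have hstep : (γ n + D * ν n / (2 * γ n) - γ 0) ^ 2
          ≤ (γ n - γ 0) ^ 2 + D * ν n := by
        have h1 : 0 ≤ D * ν n := (hν n).1
        have h2 : D * ν n ≤ L ^ 2 := (hν n).2
        have ha : γ 0 ≤ γ n := hmono n
        have hLγ : L ≤ γ n := hlow n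
        have expand : (γ n + D * ν n / (2 * γ n) - γ 0) ^ 2
            = (γ n - γ 0) ^ 2 + (γ n - γ 0) * (D * ν n) / γ n
              + (D * ν n / (2 * γ n)) ^ 2 := by
          field_simp; ring
        rw [expand]
        have hne : γ n ≠ 0 := ne_of_gt hpos
        have key2 : (γ n - γ 0) * (D * ν n) / γ n + (D * ν n / (2 * γ n)) ^ 2
            ≤ D * ν n := by
          have expand2 : (γ n - γ 0) * (D * ν n) / γ n + (D * ν n / (2 * γ n)) ^ 2
              = (4 * γ n * (γ n - γ 0) * (D * ν n) + (D * ν n) ^ 2) / (4 * γ n ^ 2) := by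
            field_simp; ring
          rw [expand2, div_le_iff₀ (by positivity)]
          have hLL : L * L ≤ γ 0 * γ n :=
            mul_le_mul hγ0 hLγ hL.le (le_trans hL.le hγ0)
          nlinarith [mul_nonneg h1 (by nlinarith : (0:ℝ) ≤ 4 * (γ 0 * γ n) - D * ν n)]
        linarith
      calc (γ n + D * ν n / (2 * γ n) - γ 0) ^ 2
          ≤ (γ n - γ 0) ^ 2 + D * ν n := hstep
        _ ≤ D * ∑ j ∈ Finset.range n, ν j + D * ν n := by linarith
        _ = D * (∑ j ∈ Finset.range n, ν j + ν n) := by ring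
  intro t
  have h1 : γ t - γ 0 ≤ Real.sqrt (D * ∑ j ∈ Finset.range t, ν j) := by
    have := Real.sqrt_le_sqrt (key t)
    rwa [Real.sqrt_sq (by linarith [hmono t])] at this
  linarith
end

section
/- Let L > 0, S ≥ 0, c and γ be reals with 0 ≤ c ≤ L² and γ ≥ L, and let x be a real with γ ≤ x ≤ √S + γ. Then x + c/(2x) ≤ √(S + c) + γ. -/
/-- **Induction step for the learning-rate growth bound (Proposition D.3).**
If `0 ≤ c ≤ L²`, `γ ≥ L > 0`, `S ≥ 0` and `γ ≤ x ≤ √S + γ`, then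
`x + c/(2x) ≤ √(S + c) + γ`. -/
theorem learning_rate_step
    (L S c γ x : ℝ) (hL : 0 < L) (hS : 0 ≤ S)
    (hc0 : 0 ≤ c) (hcL : c ≤ L ^ 2) (hγ : L ≤ γ)
    (hx1 : γ ≤ x) (hx2 : x ≤ Real.sqrt S + γ) :
    x + c / (2 * x) ≤ Real.sqrt (S + c) + γ := by
  set s := Real.sqrt S with hs
  set t := Real.sqrt (S + c) with ht
  have hs0 : 0 ≤ s := Real.sqrt_nonneg _
  have ht0 : 0 ≤ t := Real.sqrt_nonneg _
  have hs2 : s ^ 2 = S := Real.sq_sqrt hS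
  have ht2 : t ^ 2 = S + c := Real.sq_sqrt (by linarith)
  have htL : t ≤ s + L := by
    have h1 : Real.sqrt (S + c) ≤ Real.sqrt ((s + L) ^ 2) := by
      apply Real.sqrt_le_sqrt; nlinarith
    rwa [Real.sqrt_sq (by positivity)] at h1
  have hx0 : 0 < x := lt_of_lt_of_le (hL.trans_le hγ) hx1
  have key : c / (2 * x) ≤ t + γ - x := by
    rw [div_le_iff₀ (by positivity)]
    have hts : s ≤ t := by
      rw [hs, ht]; exact Real.sqrt_le_sqrt (by linarith)
    nlinarith [mul_nonneg (sub_nonneg.2 hx2) (sub_nonneg.2 hx1),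
      mul_nonneg (sub_nonneg.2 hts) (show 0 ≤ s + 2*γ - t by linarith),
      mul_nonneg (sub_nonneg.2 hx2) (show 0 ≤ 2*x*(s+γ) - c by nlinarith),
      mul_pos hx0 hx0, sq_nonneg (x - s - γ), sq_nonneg (t - s)]
  linarith
end

section
/- Let p and q̄ be reals in [0,1], and let m > 0, κ > 0 and c ≥ 0 be reals. If |p − q̄| ≤ 16·√(q̄·κ/m) + 64·(c + κ)/m, then |p − q̄| ≤ 32·√(p·κ/m) + 384·(c + κ)/m. -/
/-- **Bernstein confidence interval conversion (analytic core of Lemma A.3).**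
If `p, q̄ ∈ [0,1]`, `m > 0`, `κ > 0`, `c ≥ 0` and
`|p − q̄| ≤ 16·√(q̄·κ/m) + 64·(c + κ)/m`, then
`|p − q̄| ≤ 32·√(p·κ/m) + 384·(c + κ)/m`. -/
theorem conf_bound_to_trueP
    (p qbar m κ c : ℝ)
    (hp : p ∈ Set.Icc (0 : ℝ) 1) (hqbar : qbar ∈ Set.Icc (0 : ℝ) 1)
    (hm : 0 < m) (hκ : 0 < κ) (hc : 0 ≤ c)
    (h : |p - qbar| ≤ 16 * Real.sqrt (qbar * κ / m) + 64 * (c + κ) / m) :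
    |p - qbar| ≤ 32 * Real.sqrt (p * κ / m) + 384 * (c + κ) / m := by
  obtain ⟨hp0, hp1⟩ := hp
  obtain ⟨hq0, hq1⟩ := hqbar
  set D := |p - qbar| with hDdef
  have hD0 : 0 ≤ D := abs_nonneg _
  have hKm : 0 ≤ κ / m := by positivity
  have hx : 0 ≤ p * κ / m := by positivity
  have hy : 0 ≤ D * κ / m := by positivity
  have hqle : qbar ≤ p + D := by
    have := neg_abs_le (p - qbar)
    simp only [← hDdef] at this
    linarith
  -- sqrt(qbar κ/m) ≤ sqrt(p κ/m) + sqrt(D κ/m)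
  have h1 : Real.sqrt (qbar * κ / m) ≤ Real.sqrt (p * κ / m) + Real.sqrt (D * κ / m) := by
    have hmono : qbar * κ / m ≤ (Real.sqrt (p * κ / m) + Real.sqrt (D * κ / m)) ^ 2 := by
      have h2 : qbar * κ / m ≤ p * κ / m + D * κ / m := by
        have : qbar * κ ≤ (p + D) * κ := by nlinarith
        calc qbar * κ / m ≤ (p + D) * κ / m := by
              apply div_le_div_of_nonneg_right this hm.le |>.trans_eq rfl
          _ = p * κ / m + D * κ / m := by ring
      nlinarith [Real.sq_sqrt hx, Real.sq_sqrt hy, Real.sqrt_nonneg (p * κ / m),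
        Real.sqrt_nonneg (D * κ / m)]
    calc Real.sqrt (qbar * κ / m)
        ≤ Real.sqrt ((Real.sqrt (p * κ / m) + Real.sqrt (D * κ / m)) ^ 2) :=
          Real.sqrt_le_sqrt hmono
      _ = Real.sqrt (p * κ / m) + Real.sqrt (D * κ / m) := by
          rw [Real.sqrt_sq (by positivity)]
  -- AM-GM: 16 sqrt(D κ/m) ≤ D/2 + 128 κ/m
  have h2 : 16 * Real.sqrt (D * κ / m) ≤ D / 2 + 128 * (κ / m) := by
    have hs : Real.sqrt (D * κ / m) = Real.sqrt D * Real.sqrt (κ / m) := by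
      rw [mul_div_assoc, Real.sqrt_mul hD0]
    have ha := Real.sq_sqrt hD0
    have hb := Real.sq_sqrt hKm
    rw [hs]
    nlinarith [sq_nonneg (Real.sqrt D - 16 * Real.sqrt (κ / m))]
  have hck : κ / m ≤ (c + κ) / m := by
    apply div_le_div_of_nonneg_right (by linarith) hm.le |>.trans_eq rfl
  have e1 : 64 * (c + κ) / m = 64 * ((c + κ) / m) := by ring
  have e2 : 384 * (c + κ) / m = 384 * ((c + κ) / m) := by ring
  rw [e2]; rw [e1] at h
  linarith
end

section
/- Let P and P̂ be (possibly substochastic) transitions on a layered episodic MDP, let π be a stochastic policy, and let ℓ : S×A → ℝ be a loss function. Define Z(s,a) = Q^{P,π}(s,a;ℓ) − Σ_{s'∈S_{k(s)+1}} P̂(s'|s,a)·V^{P,π}(s';ℓ) for every (s,a) with k(s) < L. Then ⟨q^{P,π}, ℓ⟩ = ⟨q^{P̂,π}, Z⟩, i.e. Σ_{s ≠ s_L} Σ_{a} q^{P,π}(s,a)·ℓ(s,a) = Σ_{s ≠ s_L} Σ_{a} q^{P̂,π}(s,a)·Z(s,a). -/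
open Finset

/-- A layered episodic MDP: a finite state space partitioned into layers
`0, 1, …, L` (`L ≥ 1`) via the map `layer`, where layer `0` contains only the
initial state `s0` and layer `L` contains only the terminal state `sL`,
together with a finite action set. -/
structure LayeredMDP where
  State : Type
  Action : Type
  fintState : Fintype State
  decEqState : DecidableEq State
  fintAction : Fintype Action
  L : ℕ
  one_le_L : 1 ≤ L
  layer : State → ℕ
  layer_le : ∀ s, layer s ≤ L
  s0 : State
  sL : State
  layer_s0 : layer s0 = 0
  layer_sL : layer sL = L
  eq_s0_of_layer : ∀ s, layer s = 0 → s = s0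
  eq_sL_of_layer : ∀ s, layer s = L → s = sL

attribute [instance] LayeredMDP.fintState LayeredMDP.decEqState LayeredMDP.fintAction

namespace LayeredMDP

variable (M : LayeredMDP)

/-- A substochastic transition: nonnegative weights, supported on the next
layer, summing to at most `1` at every non-terminal state-action pair (the
missing mass is interpreted as moving directly to the terminal state). -/
def IsSubTransition (P : M.State → M.Action → M.State → ℝ) : Prop :=
  (∀ s a s', 0 ≤ P s a s') ∧
  (∀ s a s', P s a s' ≠ 0 → M.layer s' = M.layer s + 1) ∧
  (∀ s a, M.layer s < M.L → ∑ s', P s a s' ≤ 1)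

/-- A (fully stochastic) transition function: for each non-terminal `(s,a)`,
a probability distribution on the next layer. -/
def IsTransition (P : M.State → M.Action → M.State → ℝ) : Prop :=
  (∀ s a s', 0 ≤ P s a s') ∧
  (∀ s a s', P s a s' ≠ 0 → M.layer s' = M.layer s + 1) ∧
  (∀ s a, M.layer s < M.L → ∑ s', P s a s' = 1)

/-- A stochastic policy: a probability distribution over actions at each state. -/
def IsPolicy (π : M.State → M.Action → ℝ) : Prop :=
  (∀ s a, 0 ≤ π s a) ∧ (∀ s, ∑ a, π s a = 1)

/-- `occAuxFrom P π u n s` : probability of being at state `s` after `n` steps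
when starting from state `u`, following policy `π` under transition `P`. -/
def occAuxFrom (P : M.State → M.Action → M.State → ℝ) (π : M.State → M.Action → ℝ)
    (u : M.State) : ℕ → M.State → ℝ
  | 0 => fun s => if s = u then 1 else 0
  | n + 1 => fun s => ∑ s', ∑ a', occAuxFrom P π u n s' * π s' a' * P s' a' s

/-- Occupancy measure started at `u`: `occFrom P π u s a` is the probability of
visiting `(s,a)` when starting from `u` and executing `π` under transition `P`. -/
def occFrom (P : M.State → M.Action → M.State → ℝ) (π : M.State → M.Action → ℝ)
    (u : M.State) (s : M.State) (a : M.Action) : ℝ :=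
  (if M.layer u ≤ M.layer s then M.occAuxFrom P π u (M.layer s - M.layer u) s else 0) * π s a

/-- Occupancy measure `q^{P,π}(s,a)` (started at the initial state `s0`). -/
def occ (P : M.State → M.Action → M.State → ℝ) (π : M.State → M.Action → ℝ)
    (s : M.State) (a : M.Action) : ℝ :=
  M.occFrom P π M.s0 s a

/-- State occupancy measure `q^{P,π}(s) = Σ_a q^{P,π}(s,a)`. -/
def occState (P : M.State → M.Action → M.State → ℝ) (π : M.State → M.Action → ℝ)
    (s : M.State) : ℝ :=
  ∑ a, M.occ P π s a

/-- Backward recursion for value functions: `valAux P π ℓ n s` is the value of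
state `s` with `n` steps remaining. -/
def valAux (P : M.State → M.Action → M.State → ℝ) (π : M.State → M.Action → ℝ)
    (ℓ : M.State → M.Action → ℝ) : ℕ → M.State → ℝ
  | 0 => fun _ => 0
  | n + 1 => fun s => ∑ a, π s a * (ℓ s a + ∑ s', P s a s' * valAux P π ℓ n s')

/-- State value function `V^{P,π}(s;ℓ)`. -/
def V (P : M.State → M.Action → M.State → ℝ) (π : M.State → M.Action → ℝ)
    (ℓ : M.State → M.Action → ℝ) (s : M.State) : ℝ :=
  M.valAux P π ℓ (M.L - M.layer s) s

/-- State-action value function `Q^{P,π}(s,a;ℓ)` (equal to `0` at the terminal layer). -/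
def Q (P : M.State → M.Action → M.State → ℝ) (π : M.State → M.Action → ℝ)
    (ℓ : M.State → M.Action → ℝ) (s : M.State) (a : M.Action) : ℝ :=
  if M.layer s < M.L then ℓ s a + ∑ s', P s a s' * M.V P π ℓ s' else 0

/-- Support of the occupancy auxiliary: after `n` steps we are at layer
`layer u + n`. -/
lemma occAuxFrom_support {R : M.State → M.Action → M.State → ℝ}
    (hR : ∀ s a s', R s a s' ≠ 0 → M.layer s' = M.layer s + 1)
    (π : M.State → M.Action → ℝ) (u : M.State) :
    ∀ n s, M.layer s ≠ M.layer u + n → M.occAuxFrom R π u n s = 0 := by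
  intro n
  induction n with
  | zero =>
    intro s hs
    have hsu : s ≠ u := by rintro rfl; simp at hs
    simp [occAuxFrom, hsu]
  | succ n ih =>
    intro s hs
    simp only [occAuxFrom]
    refine Finset.sum_eq_zero fun s' _ => Finset.sum_eq_zero fun a _ => ?_
    by_cases h1 : R s' a s = 0
    · simp [h1]
    · have h2 := hR s' a s h1
      have h3 : M.layer s' ≠ M.layer u + n := by omega
      rw [ih s' h3]; ring

/-- `V` at a non-terminal state unfolds through `Q`. -/
lemma V_eq_sum_Q {P : M.State → M.Action → M.State → ℝ}
    (hP : M.IsSubTransition P) (π : M.State → M.Action → ℝ)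
    (ℓ : M.State → M.Action → ℝ) (s : M.State) (h : M.layer s < M.L) :
    M.V P π ℓ s = ∑ a, π s a * M.Q P π ℓ s a := by
  have hn : M.L - M.layer s = (M.L - M.layer s - 1) + 1 := by omega
  rw [V, hn]
  simp only [valAux]
  refine Finset.sum_congr rfl fun a _ => ?_
  rw [Q, if_pos h]
  congr 2
  refine Finset.sum_congr rfl fun s' _ => ?_
  by_cases hz : P s a s' = 0
  · simp [hz]
  · have hl := hP.2.1 s a s' hz
    have : M.L - M.layer s' = M.L - M.layer s - 1 := by omega
    rw [V, this]

lemma V_terminal {P : M.State → M.Action → M.State → ℝ}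
    (π : M.State → M.Action → ℝ) (ℓ : M.State → M.Action → ℝ)
    (s : M.State) (h : M.layer s = M.L) :
    M.V P π ℓ s = 0 := by
  rw [V, h]
  simp [valAux]

/-- Key telescoping identity: for any substochastic transition `R`,
`⟨q^{R,π}, Q^{P,π} − R·V^{P,π}⟩ = V^{P,π}(s0)`. -/
lemma key_telescope (P R : M.State → M.Action → M.State → ℝ)
    (hP : M.IsSubTransition P) (hR : M.IsSubTransition R)
    (π : M.State → M.Action → ℝ) (hπ : M.IsPolicy π)
    (ℓ : M.State → M.Action → ℝ) :
    ∑ s ∈ Finset.univ.filter (fun s => s ≠ M.sL), ∑ a,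
        M.occ R π s a * (M.Q P π ℓ s a - ∑ s', R s a s' * M.V P π ℓ s')
      = M.V P π ℓ M.s0 := by
  classical
  set E := Finset.univ.filter (fun s => s ≠ M.sL) with hE
  set f : M.State → ℝ := fun s => M.occAuxFrom R π M.s0 (M.layer s) s with hf
  have hocc : ∀ s a, M.occ R π s a = f s * π s a := by
    intro s a
    simp [occ, occFrom, M.layer_s0, hf]
  have hlt : ∀ s : M.State, s ≠ M.sL → M.layer s < M.L := by
    intro s hs
    rcases lt_or_eq_of_le (M.layer_le s) with h | h
    · exact h
    · exact absurd (M.eq_sL_of_layer s h) hs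
  have hfs0 : f M.s0 = 1 := by simp [hf, M.layer_s0, occAuxFrom]
  have hRlayer := hR.2.1
  -- the terms at `s = sL` vanish since `R sL a s' = 0`
  have hRsL : ∀ a s', R M.sL a s' = 0 := by
    intro a s'
    by_contra hz
    have := hRlayer _ a _ hz
    have := M.layer_le s'
    rw [M.layer_sL] at *
    omega
  -- expand the summand
  have expand :
      ∑ s ∈ E, ∑ a, M.occ R π s a *
          (M.Q P π ℓ s a - ∑ s', R s a s' * M.V P π ℓ s')
        = (∑ s ∈ E, ∑ a, f s * π s a * M.Q P π ℓ s a)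
          - ∑ s ∈ E, ∑ a, ∑ s', f s * π s a * R s a s' * M.V P π ℓ s' := by
    rw [← Finset.sum_sub_distrib]
    refine Finset.sum_congr rfl fun s _ => ?_
    rw [← Finset.sum_sub_distrib]
    refine Finset.sum_congr rfl fun a _ => ?_
    rw [hocc, mul_sub, Finset.mul_sum]
    congr 1
    refine Finset.sum_congr rfl fun s' _ => ?_
    ring
  -- first part is ∑_{s ∈ E} f s * V s = ∑_{s} f s * V s
  have hA : (∑ s ∈ E, ∑ a, f s * π s a * M.Q P π ℓ s a)
      = ∑ s, f s * M.V P π ℓ s := by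
    rw [hE, Finset.filter_ne']
    rw [← Finset.add_sum_erase _ (fun s => f s * M.V P π ℓ s) (Finset.mem_univ M.sL)]
    rw [M.V_terminal π ℓ M.sL M.layer_sL, mul_zero, zero_add]
    refine Finset.sum_congr rfl fun s hs => ?_
    have hsne : s ≠ M.sL := Finset.ne_of_mem_erase hs
    rw [M.V_eq_sum_Q hP π ℓ s (hlt s hsne), Finset.mul_sum]
    refine Finset.sum_congr rfl fun a _ => ?_
    ring
  -- the inner sums of the second part equal `f s'` (or `0` at `s0`)
  have hG : ∀ s', (∑ s ∈ E, ∑ a, f s * π s a * R s a s')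
      = if s' = M.s0 then 0 else f s' := by
    intro s'
    by_cases hs0 : s' = M.s0
    · subst hs0
      rw [if_pos rfl]
      refine Finset.sum_eq_zero fun s _ => Finset.sum_eq_zero fun a _ => ?_
      have hz : R s a M.s0 = 0 := by
        by_contra hz
        have := hRlayer s a M.s0 hz
        rw [M.layer_s0] at this
        omega
      rw [hz, mul_zero]
    · rw [if_neg hs0]
      have hk1 : 1 ≤ M.layer s' := by
        rcases Nat.eq_zero_or_pos (M.layer s') with h | h
        · exact absurd (M.eq_s0_of_layer s' h) hs0
        · exact h
      have hks : M.layer s' = (M.layer s' - 1) + 1 := by omega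
      have hext : (∑ s ∈ E, ∑ a, f s * π s a * R s a s')
          = ∑ s, ∑ a, f s * π s a * R s a s' := by
        rw [hE]
        refine Finset.sum_subset (Finset.filter_subset _ _) fun s _ hs => ?_
        have hsl : s = M.sL := by
          by_contra hc
          exact hs (Finset.mem_filter.mpr ⟨Finset.mem_univ s, hc⟩)
        subst hsl
        exact Finset.sum_eq_zero fun a _ => by rw [hRsL, mul_zero]
      rw [hext]
      conv_rhs => rw [hf]
      simp only
      rw [hks]
      simp only [occAuxFrom]
      refine Finset.sum_congr rfl fun s _ => Finset.sum_congr rfl fun a _ => ?_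
      by_cases hz : R s a s' = 0
      · rw [hz]; ring
      · have hl := hRlayer s a s' hz
        have hls : M.layer s = M.layer s' - 1 := by omega
        rw [hf]
        simp only
        rw [hls]
  -- second part telescopes
  have hB : (∑ s ∈ E, ∑ a, ∑ s', f s * π s a * R s a s' * M.V P π ℓ s')
      = (∑ s, f s * M.V P π ℓ s) - M.V P π ℓ M.s0 := by
    have step1 : (∑ s ∈ E, ∑ a, ∑ s', f s * π s a * R s a s' * M.V P π ℓ s')
        = ∑ s', (∑ s ∈ E, ∑ a, f s * π s a * R s a s') * M.V P π ℓ s' := by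
      calc (∑ s ∈ E, ∑ a, ∑ s', f s * π s a * R s a s' * M.V P π ℓ s')
          = ∑ s ∈ E, ∑ s', ∑ a, f s * π s a * R s a s' * M.V P π ℓ s' :=
            Finset.sum_congr rfl fun s _ => Finset.sum_comm
        _ = ∑ s', ∑ s ∈ E, ∑ a, f s * π s a * R s a s' * M.V P π ℓ s' :=
            Finset.sum_comm
        _ = ∑ s', (∑ s ∈ E, ∑ a, f s * π s a * R s a s') * M.V P π ℓ s' := by
            refine Finset.sum_congr rfl fun s' _ => ?_
            rw [Finset.sum_mul]
            exact Finset.sum_congr rfl fun s _ => (Finset.sum_mul _ _ _).symm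
    rw [step1]
    have step2 : ∀ s' : M.State,
        (∑ s ∈ E, ∑ a, f s * π s a * R s a s') * M.V P π ℓ s'
        = f s' * M.V P π ℓ s'
          - (if s' = M.s0 then f M.s0 * M.V P π ℓ M.s0 else 0) := by
      intro s'
      rw [hG s']
      by_cases hs0 : s' = M.s0
      · subst hs0; simp
      · simp [hs0]
    rw [Finset.sum_congr rfl fun s' _ => step2 s', Finset.sum_sub_distrib]
    rw [Finset.sum_ite_eq' Finset.univ M.s0
      (fun _ => f M.s0 * M.V P π ℓ M.s0)]
    simp [hfs0]
  rw [expand, hA, hB]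
  ring

end LayeredMDP

open LayeredMDP in
/-- **Change-of-transition identity (Lemma C.2).**
For (possibly substochastic) transitions `P, P̂`, a stochastic policy `π` and a
loss function `ℓ`, with
`Z(s,a) = Q^{P,π}(s,a;ℓ) − Σ_{s'} P̂(s'|s,a)·V^{P,π}(s';ℓ)`, one has
`⟨q^{P,π}, ℓ⟩ = ⟨q^{P̂,π}, Z⟩`. -/
theorem change_of_transition (M : LayeredMDP)
    (P Phat : M.State → M.Action → M.State → ℝ)
    (hP : M.IsSubTransition P) (hPhat : M.IsSubTransition Phat)
    (π : M.State → M.Action → ℝ) (hπ : M.IsPolicy π)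
    (ℓ : M.State → M.Action → ℝ) :
    ∑ s ∈ Finset.univ.filter (fun s => s ≠ M.sL), ∑ a,
        M.occ P π s a * ℓ s a =
      ∑ s ∈ Finset.univ.filter (fun s => s ≠ M.sL), ∑ a,
        M.occ Phat π s a *
          (M.Q P π ℓ s a - ∑ s', Phat s a s' * M.V P π ℓ s') := by
  have hlt : ∀ s : M.State, s ≠ M.sL → M.layer s < M.L := by
    intro s hs
    rcases lt_or_eq_of_le (M.layer_le s) with h | h
    · exact h
    · exact absurd (M.eq_sL_of_layer s h) hs
  have hL : ∑ s ∈ Finset.univ.filter (fun s => s ≠ M.sL), ∑ a,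
      M.occ P π s a * ℓ s a
      = ∑ s ∈ Finset.univ.filter (fun s => s ≠ M.sL), ∑ a,
        M.occ P π s a * (M.Q P π ℓ s a - ∑ s', P s a s' * M.V P π ℓ s') := by
    refine Finset.sum_congr rfl fun s hs => Finset.sum_congr rfl fun a _ => ?_
    have hsne : s ≠ M.sL := (Finset.mem_filter.mp hs).2
    rw [LayeredMDP.Q, if_pos (hlt s hsne)]
    ring
  rw [hL, M.key_telescope P P hP hP π hπ ℓ,
    M.key_telescope P Phat hP hPhat π hπ ℓ]
end

section
/- Let P̃ be a (possibly substochastic) transition on a layered episodic MDP, let π be a stochastic policy, let ℓ : S×A → ℝ be a loss function, and define g(s,a) = Q^{P̃,π}(s,a;ℓ) − V^{P̃,π}(s;ℓ) − ℓ(s,a). Then for every stochastic policy π': Σ_{s ≠ s_L} Σ_{a ∈ A} q^{P̃,π'}(s,a)·g(s,a) = −V^{P̃,π}(s_0;ℓ). In particular, the left-hand side does not depend on π'. -/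
open Finset

open LayeredMDP in
lemma occAux_layer_support (M : LayeredMDP)
    (Pt : M.State → M.Action → M.State → ℝ) (hPt : M.IsSubTransition Pt)
    (π' : M.State → M.Action → ℝ) :
    ∀ n s, M.occAuxFrom Pt π' M.s0 n s ≠ 0 → M.layer s = n := by
  intro n
  induction n with
  | zero =>
    intro s hs
    simp only [LayeredMDP.occAuxFrom] at hs
    split at hs
    · subst ‹s = M.s0›; exact M.layer_s0
    · simp at hs
  | succ n ih =>
    intro s hs
    simp only [LayeredMDP.occAuxFrom] at hs
    obtain ⟨s', -, hs'⟩ := Finset.exists_ne_zero_of_sum_ne_zero hs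
    obtain ⟨a', -, ha'⟩ := Finset.exists_ne_zero_of_sum_ne_zero hs'
    have h1 : M.occAuxFrom Pt π' M.s0 n s' ≠ 0 := fun h => ha' (by simp [h])
    have h2 : Pt s' a' s ≠ 0 := fun h => ha' (by simp [h])
    rw [hPt.2.1 s' a' s h2, ih s' h1]

open LayeredMDP in
/-- **Loss-shifting lemma (Lemma E.1).**
For a substochastic transition `P̃`, a stochastic policy `π` and a loss `ℓ`,
let `g(s,a) = Q^{P̃,π}(s,a;ℓ) − V^{P̃,π}(s;ℓ) − ℓ(s,a)`.  Then for every
stochastic policy `π'`,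
`Σ_{s ≠ s_L} Σ_a q^{P̃,π'}(s,a)·g(s,a) = −V^{P̃,π}(s₀;ℓ)`;
in particular the left-hand side does not depend on `π'`. -/
theorem loss_shifting (M : LayeredMDP)
    (Pt : M.State → M.Action → M.State → ℝ) (hPt : M.IsSubTransition Pt)
    (π : M.State → M.Action → ℝ) (hπ : M.IsPolicy π)
    (ℓ : M.State → M.Action → ℝ) :
    ∀ π' : M.State → M.Action → ℝ, M.IsPolicy π' →
      ∑ s ∈ Finset.univ.filter (fun s => s ≠ M.sL), ∑ a,
          M.occ Pt π' s a * (M.Q Pt π ℓ s a - M.V Pt π ℓ s - ℓ s a) =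
        -(M.V Pt π ℓ M.s0) := by
  intro π' hπ'
  have hsupp := occAux_layer_support M Pt hPt π'
  set T : ℕ → ℝ := fun k =>
    ∑ s ∈ Finset.univ.filter (fun s => M.layer s = k),
      M.occAuxFrom Pt π' M.s0 k s * M.V Pt π ℓ s with hT
  have hfilt : Finset.univ.filter (fun s : M.State => s ≠ M.sL) =
      Finset.univ.filter (fun s => M.layer s < M.L) := by
    apply Finset.filter_congr
    intro s _
    constructor
    · intro h
      exact lt_of_le_of_ne (M.layer_le s) (fun hL => h (M.eq_sL_of_layer s hL))
    · intro h hs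
      rw [hs, M.layer_sL] at h; exact lt_irrefl _ h
  rw [hfilt]
  have hmaps : ∀ s ∈ Finset.univ.filter (fun s => M.layer s < M.L),
      M.layer s ∈ Finset.range M.L := by
    intro s hs
    simp only [Finset.mem_filter] at hs
    exact Finset.mem_range.2 hs.2
  rw [← Finset.sum_fiberwise_of_maps_to hmaps]
  have hstep : ∀ k ∈ Finset.range M.L,
      (∑ s ∈ (Finset.univ.filter (fun s => M.layer s < M.L)).filter
          (fun s => M.layer s = k), ∑ a,
        M.occ Pt π' s a * (M.Q Pt π ℓ s a - M.V Pt π ℓ s - ℓ s a)) =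
      T (k + 1) - T k := by
    intro k hk
    have hkL : k < M.L := Finset.mem_range.1 hk
    have hff : (Finset.univ.filter (fun s : M.State => M.layer s < M.L)).filter
        (fun s => M.layer s = k) = Finset.univ.filter (fun s => M.layer s = k) := by
      rw [Finset.filter_filter]
      apply Finset.filter_congr
      intro s _
      constructor
      · exact fun h => h.2
      · exact fun h => ⟨h ▸ hkL, h⟩
    rw [hff]
    have hsummand : ∀ s ∈ Finset.univ.filter (fun s : M.State => M.layer s = k),
        (∑ a, M.occ Pt π' s a * (M.Q Pt π ℓ s a - M.V Pt π ℓ s - ℓ s a)) =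
        (∑ a, ∑ s', M.occAuxFrom Pt π' M.s0 k s * π' s a * Pt s a s' * M.V Pt π ℓ s')
          - M.occAuxFrom Pt π' M.s0 k s * M.V Pt π ℓ s := by
      intro s hs
      have hls : M.layer s = k := by
        simpa using (Finset.mem_filter.1 hs).2
      have hlsL : M.layer s < M.L := hls ▸ hkL
      have hterm : ∀ a, M.occ Pt π' s a * (M.Q Pt π ℓ s a - M.V Pt π ℓ s - ℓ s a) =
          (∑ s', M.occAuxFrom Pt π' M.s0 k s * π' s a * Pt s a s' * M.V Pt π ℓ s')
            - M.occAuxFrom Pt π' M.s0 k s * π' s a * M.V Pt π ℓ s := by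
        intro a
        have hocc : M.occ Pt π' s a = M.occAuxFrom Pt π' M.s0 k s * π' s a := by
          simp [LayeredMDP.occ, LayeredMDP.occFrom, M.layer_s0, hls]
        have hQ : M.Q Pt π ℓ s a = ℓ s a + ∑ s', Pt s a s' * M.V Pt π ℓ s' := by
          rw [LayeredMDP.Q, if_pos hlsL]
        rw [hocc, hQ]
        rw [show ℓ s a + (∑ s', Pt s a s' * M.V Pt π ℓ s') - M.V Pt π ℓ s - ℓ s a
            = (∑ s', Pt s a s' * M.V Pt π ℓ s') - M.V Pt π ℓ s by ring]
        rw [mul_sub, Finset.mul_sum]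
        congr 1
        apply Finset.sum_congr rfl
        intro s' _
        ring
      rw [Finset.sum_congr rfl (fun a _ => hterm a), Finset.sum_sub_distrib]
      congr 1
      rw [show (∑ a, M.occAuxFrom Pt π' M.s0 k s * π' s a * M.V Pt π ℓ s)
          = M.occAuxFrom Pt π' M.s0 k s * (∑ a, π' s a) * M.V Pt π ℓ s by
        rw [Finset.mul_sum, Finset.sum_mul]]
      rw [hπ'.2 s, mul_one]
    rw [Finset.sum_congr rfl hsummand, Finset.sum_sub_distrib]
    congr 1
    -- first piece equals T (k+1)
    have hext : (∑ s ∈ Finset.univ.filter (fun s : M.State => M.layer s = k), ∑ a, ∑ s',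
          M.occAuxFrom Pt π' M.s0 k s * π' s a * Pt s a s' * M.V Pt π ℓ s')
        = ∑ s, ∑ a, ∑ s',
          M.occAuxFrom Pt π' M.s0 k s * π' s a * Pt s a s' * M.V Pt π ℓ s' := by
      apply Finset.sum_subset (Finset.filter_subset _ _)
      intro s _ hs
      have h0 : M.occAuxFrom Pt π' M.s0 k s = 0 := by
        by_contra h
        exact hs (Finset.mem_filter.2 ⟨Finset.mem_univ s, hsupp k s h⟩)
      simp [h0]
    rw [hext]
    have hswap : (∑ s, ∑ a, ∑ s',
          M.occAuxFrom Pt π' M.s0 k s * π' s a * Pt s a s' * M.V Pt π ℓ s')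
        = ∑ s', M.occAuxFrom Pt π' M.s0 (k + 1) s' * M.V Pt π ℓ s' := by
      have h1 : (∑ s, ∑ a, ∑ s',
            M.occAuxFrom Pt π' M.s0 k s * π' s a * Pt s a s' * M.V Pt π ℓ s')
          = ∑ s', ∑ s, ∑ a,
            M.occAuxFrom Pt π' M.s0 k s * π' s a * Pt s a s' * M.V Pt π ℓ s' := by
        rw [Finset.sum_congr rfl (fun s _ => Finset.sum_comm), Finset.sum_comm]
      rw [h1]
      apply Finset.sum_congr rfl
      intro s' _
      rw [LayeredMDP.occAuxFrom, Finset.sum_mul]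
      apply Finset.sum_congr rfl
      intro s _
      rw [Finset.sum_mul]
    rw [hswap, hT]
    symm
    apply Finset.sum_filter_of_ne
    intro s' _ h
    exact hsupp (k + 1) s' fun h0 => h (by simp [h0])
  rw [Finset.sum_congr rfl hstep, Finset.sum_range_sub]
  have hTL : T M.L = 0 := by
    apply Finset.sum_eq_zero
    intro s hs
    have hls : M.layer s = M.L := by simpa using (Finset.mem_filter.1 hs).2
    have : M.V Pt π ℓ s = 0 := by
      rw [LayeredMDP.V, hls, Nat.sub_self]
      rfl
    rw [this, mul_zero]
  have hT0 : T 0 = M.V Pt π ℓ M.s0 := by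
    have hset : Finset.univ.filter (fun s : M.State => M.layer s = 0) = {M.s0} := by
      ext s
      simp only [Finset.mem_filter, Finset.mem_univ, true_and, Finset.mem_singleton]
      exact ⟨fun h => M.eq_s0_of_layer s h, fun h => h ▸ M.layer_s0⟩
    rw [hT]
    simp only [hset, Finset.sum_singleton]
    have : M.occAuxFrom Pt π' M.s0 0 M.s0 = 1 := by
      simp [LayeredMDP.occAuxFrom]
    rw [this, one_mul]
  rw [hTL, hT0]
  ring
end

section
/- Let P̄ be a transition function on a layered episodic MDP and let B assign a nonnegative real B(s,a,s') to each triple with k(s) < L and s' ∈ S_{k(s)+1}. Define the optimistic substochastic transition P̃(s'|s,a) = max{0, P̄(s'|s,a) − B(s,a,s')} and the bonus function Bonus(s,a) = L·min{1, Σ_{s'∈S_{k(s)+1}} B(s,a,s')}. Then for every stochastic policy π and every loss function ℓ : S×A → [0,1]: Q^{P̄,π}(s,a; ℓ − Bonus) ≤ Q^{P̃,π}(s,a; ℓ) for every state-action pair (s,a). -/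
open Finset

open LayeredMDP in
/-- **Tighter performance estimation via optimistic transitions (Lemma D.12).**
Given a transition function `P̄`, nonnegative confidence widths `B`, the
optimistic substochastic transition `P̃(s'|s,a) = max{0, P̄(s'|s,a) − B(s,a,s')}`
and the bonus `Bonus(s,a) = L·min{1, Σ_{s'∈S_{k(s)+1}} B(s,a,s')}`, for every
stochastic policy `π` and every loss `ℓ : S×A → [0,1]`,
`Q^{P̄,π}(s,a; ℓ − Bonus) ≤ Q^{P̃,π}(s,a; ℓ)` for every `(s,a)`. -/
theorem tighter_performance_estimation (M : LayeredMDP)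
    (Pbar : M.State → M.Action → M.State → ℝ) (hPbar : M.IsTransition Pbar)
    (B : M.State → M.Action → M.State → ℝ) (hB : ∀ s a s', 0 ≤ B s a s')
    (π : M.State → M.Action → ℝ) (hπ : M.IsPolicy π)
    (ℓ : M.State → M.Action → ℝ) (hℓ : ∀ s a, ℓ s a ∈ Set.Icc (0 : ℝ) 1) :
    ∀ s a,
      M.Q Pbar π
          (fun s a => ℓ s a -
            (M.L : ℝ) * min 1
              (∑ s' ∈ Finset.univ.filter (fun s' => M.layer s' = M.layer s + 1),
                B s a s')) s a
        ≤ M.Q (fun s a s' => max 0 (Pbar s a s' - B s a s')) π ℓ s a := by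
  obtain ⟨hP0, hPsupp, hPsum⟩ := hPbar
  obtain ⟨hπ0, hπ1⟩ := hπ
  set Pt : M.State → M.Action → M.State → ℝ :=
    fun s a s' => max 0 (Pbar s a s' - B s a s') with hPtdef
  set ℓ' : M.State → M.Action → ℝ :=
    fun s a => ℓ s a -
      (M.L : ℝ) * min 1
        (∑ s' ∈ Finset.univ.filter (fun s' => M.layer s' = M.layer s + 1),
          B s a s') with hℓ'def
  have hPt0 : ∀ s a s', 0 ≤ Pt s a s' := fun s a s' => le_max_left _ _
  have hPtle : ∀ s a s', Pt s a s' ≤ Pbar s a s' := fun s a s' =>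
    max_le (hP0 s a s') (sub_le_self _ (hB s a s'))
  -- sum of Pbar is at most 1 everywhere
  have hPbarsum : ∀ s a, ∑ s', Pbar s a s' ≤ 1 := by
    intro s a
    rcases lt_or_ge (M.layer s) M.L with h | h
    · exact le_of_eq (hPsum s a h)
    · have hz : ∀ s', Pbar s a s' = 0 := by
        intro s'
        by_contra hne
        have h1 := hPsupp s a s' hne
        have h2 := M.layer_le s'
        omega
      simp [hz]
  have hPtsum : ∀ s a, ∑ s', Pt s a s' ≤ 1 := fun s a =>
    le_trans (Finset.sum_le_sum fun s' _ => hPtle s a s') (hPbarsum s a)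
  -- bounds on the optimistic value function
  have hval : ∀ n s, 0 ≤ M.valAux Pt π ℓ n s ∧ M.valAux Pt π ℓ n s ≤ n := by
    intro n
    induction n with
    | zero => intro s; simp [LayeredMDP.valAux]
    | succ n ih =>
      intro s
      constructor
      · apply Finset.sum_nonneg
        intro a _
        apply mul_nonneg (hπ0 s a)
        have h1 : 0 ≤ ∑ s', Pt s a s' * M.valAux Pt π ℓ n s' :=
          Finset.sum_nonneg fun s' _ => mul_nonneg (hPt0 s a s') (ih s').1
        linarith [(hℓ s a).1]
      · have h1 : ∀ a, π s a * (ℓ s a + ∑ s', Pt s a s' * M.valAux Pt π ℓ n s')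
            ≤ π s a * (1 + n) := by
          intro a
          apply mul_le_mul_of_nonneg_left _ (hπ0 s a)
          have h2 : ∑ s', Pt s a s' * M.valAux Pt π ℓ n s' ≤ ∑ s', Pt s a s' * n :=
            Finset.sum_le_sum fun s' _ =>
              mul_le_mul_of_nonneg_left (ih s').2 (hPt0 s a s')
          have h3 : ∑ s', Pt s a s' * (n : ℝ) = (∑ s', Pt s a s') * n := by
            rw [Finset.sum_mul]
          have h4 : (∑ s', Pt s a s') * (n : ℝ) ≤ 1 * n := by
            apply mul_le_mul_of_nonneg_right (hPtsum s a) (Nat.cast_nonneg n)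
          have := (hℓ s a).2
          nlinarith
        calc ∑ a, π s a * (ℓ s a + ∑ s', Pt s a s' * M.valAux Pt π ℓ n s')
            ≤ ∑ a, π s a * (1 + n) := Finset.sum_le_sum fun a _ => h1 a
          _ = (1 + n) := by rw [← Finset.sum_mul, hπ1 s, one_mul]
          _ = ((n + 1 : ℕ) : ℝ) := by push_cast; ring
  -- the key one-step inequality
  have key : ∀ (s : M.State) (a : M.Action) (f g : M.State → ℝ),
      (∀ s', Pbar s a s' ≠ 0 → f s' ≤ g s') → (∀ s', 0 ≤ g s') →
      (∀ s', g s' ≤ M.L) →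
      ℓ' s a + ∑ s', Pbar s a s' * f s' ≤ ℓ s a + ∑ s', Pt s a s' * g s' := by
    intro s a f g hfg hg0 hgL
    have step1 : ∑ s', Pbar s a s' * f s' ≤ ∑ s', Pbar s a s' * g s' := by
      apply Finset.sum_le_sum
      intro s' _
      rcases eq_or_ne (Pbar s a s') 0 with h | h
      · simp [h]
      · exact mul_le_mul_of_nonneg_left (hfg s' h) (hP0 s a s')
    have hDnn : ∀ s', 0 ≤ Pbar s a s' - Pt s a s' := fun s' =>
      sub_nonneg.2 (hPtle s a s')
    have hDB : ∀ s', Pbar s a s' - Pt s a s' ≤ B s a s' := by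
      intro s'
      have : Pbar s a s' - B s a s' ≤ Pt s a s' := le_max_right _ _
      linarith
    -- difference sum bounded by min 1 (Σ B over next layer)
    have sumD_le_one : ∑ s', (Pbar s a s' - Pt s a s') ≤ 1 := by
      have : ∑ s', (Pbar s a s' - Pt s a s') ≤ ∑ s', Pbar s a s' :=
        Finset.sum_le_sum fun s' _ => by linarith [hPt0 s a s']
      exact le_trans this (hPbarsum s a)
    have sumD_le_B : ∑ s', (Pbar s a s' - Pt s a s')
        ≤ ∑ s' ∈ Finset.univ.filter (fun s' => M.layer s' = M.layer s + 1), B s a s' := by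
      have heq : ∑ s', (Pbar s a s' - Pt s a s')
          = ∑ s' ∈ Finset.univ.filter (fun s' => M.layer s' = M.layer s + 1),
              (Pbar s a s' - Pt s a s') := by
        symm
        apply Finset.sum_subset (Finset.filter_subset _ _)
        intro s' _ hs'
        simp only [Finset.mem_filter, Finset.mem_univ, true_and] at hs'
        have hz : Pbar s a s' = 0 := by
          by_contra hne
          exact hs' (hPsupp s a s' hne)
        have hz2 : Pt s a s' = 0 := by
          have h1 := hPt0 s a s'
          have h2 := hPtle s a s'
          linarith
        rw [hz, hz2, sub_zero]
      rw [heq]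
      exact Finset.sum_le_sum fun s' _ => hDB s'
    have sumD_le : ∑ s', (Pbar s a s' - Pt s a s')
        ≤ min 1 (∑ s' ∈ Finset.univ.filter (fun s' => M.layer s' = M.layer s + 1),
            B s a s') := le_min sumD_le_one sumD_le_B
    have step2 : ∑ s', (Pbar s a s' - Pt s a s') * g s'
        ≤ (M.L : ℝ) * min 1
            (∑ s' ∈ Finset.univ.filter (fun s' => M.layer s' = M.layer s + 1),
              B s a s') := by
      have h1 : ∑ s', (Pbar s a s' - Pt s a s') * g s'
          ≤ ∑ s', (Pbar s a s' - Pt s a s') * (M.L : ℝ) :=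
        Finset.sum_le_sum fun s' _ =>
          mul_le_mul_of_nonneg_left (hgL s') (hDnn s')
      have h2 : ∑ s', (Pbar s a s' - Pt s a s') * (M.L : ℝ)
          = (∑ s', (Pbar s a s' - Pt s a s')) * (M.L : ℝ) := by
        rw [Finset.sum_mul]
      have h3 : (∑ s', (Pbar s a s' - Pt s a s')) * (M.L : ℝ)
          ≤ min 1 (∑ s' ∈ Finset.univ.filter (fun s' => M.layer s' = M.layer s + 1),
              B s a s') * (M.L : ℝ) :=
        mul_le_mul_of_nonneg_right sumD_le (Nat.cast_nonneg _)
      linarith [h1, h2, h3]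
    have expand : ∑ s', Pbar s a s' * g s'
        = ∑ s', Pt s a s' * g s' + ∑ s', (Pbar s a s' - Pt s a s') * g s' := by
      rw [← Finset.sum_add_distrib]
      apply Finset.sum_congr rfl
      intro s' _
      ring
    simp only [hℓ'def]
    linarith [step1, step2, expand.ge, expand.le]
  -- main induction: valAux comparison at matching layers
  have main : ∀ n, ∀ s : M.State, M.layer s + n = M.L →
      M.valAux Pbar π ℓ' n s ≤ M.valAux Pt π ℓ n s := by
    intro n
    induction n with
    | zero => intro s _; simp [LayeredMDP.valAux]
    | succ n ih =>
      intro s hs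
      simp only [LayeredMDP.valAux]
      apply Finset.sum_le_sum
      intro a _
      apply mul_le_mul_of_nonneg_left _ (hπ0 s a)
      apply key s a
      · intro s' hne
        apply ih
        have := hPsupp s a s' hne
        omega
      · intro s'; exact (hval n s').1
      · intro s'
        have h1 := (hval n s').2
        have h2 : (n : ℝ) ≤ (M.L : ℝ) := by exact_mod_cast Nat.le_of_lt (by omega)
        linarith
  -- conclude for Q
  intro s a
  simp only [LayeredMDP.Q]
  split
  case isTrue h =>
    apply key s a
    · intro s' hne
      have hlay := hPsupp s a s' hne
      show M.valAux Pbar π ℓ' (M.L - M.layer s') s' ≤ M.valAux Pt π ℓ (M.L - M.layer s') s'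
      apply main
      omega
    · intro s'; exact (hval _ s').1
    · intro s'
      have h1 := (hval (M.L - M.layer s') s').2
      have h2 : ((M.L - M.layer s' : ℕ) : ℝ) ≤ (M.L : ℝ) := by
        exact_mod_cast Nat.sub_le _ _
      have h3 : M.V Pt π ℓ s' = M.valAux Pt π ℓ (M.L - M.layer s') s' := rfl
      linarith
  case isFalse h => exact le_refl 0
end

section
/- Let P and P' be two transition functions on a layered episodic MDP and set c = Σ_{k=0}^{L-1} max_{(s,a)∈S_k×A} ‖P(·|s,a) − P'(·|s,a)‖₁, where ‖P(·|s,a) − P'(·|s,a)‖₁ = Σ_{s'∈S_{k+1}} |P(s'|s,a) − P'(s'|s,a)|. Then for every stochastic policy π: (i) |q^{P,π}(s) − q^{P',π}(s)| ≤ c for every state s ≠ s_L, and (ii) Σ_{s ≠ s_L} |q^{P,π}(s) − q^{P',π}(s)| ≤ L·c. -/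
open Finset

/-!
Let `d_n`, `d'_n` be the state distributions after `n` steps under `P` and `P'`. Then
`d_{n+1} - d'_{n+1} = (d_n - d'_n) P^π + d'_n (P - P')^π`. The first term has `ℓ₁`-norm at most
`‖d_n - d'_n‖₁` because `P^π` is substochastic, the second at most `c_n ‖d'_n‖₁ ≤ c_n` because
`d'_n` lives on layer `n`, where `c_n` is the worst-case corruption of layer `n`. Hence
`‖d_k - d'_k‖₁ ≤ c_0 + ⋯ + c_{k-1} ≤ c`, which gives (i), and summing this over the `L`
non-terminal layers gives (ii).
-/

namespace LayeredMDP

def push (M : LayeredMDP) (P : M.State → M.Action → M.State → ℝ) (π : M.State → M.Action → ℝ)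
    (d : M.State → ℝ) (s : M.State) : ℝ :=
  ∑ s', ∑ a, d s' * π s' a * P s' a s

noncomputable def corruption (M : LayeredMDP) (P P' : M.State → M.Action → M.State → ℝ)
    (k : ℕ) : ℝ :=
  ⨆ s ∈ {s : M.State | M.layer s = k}, ⨆ a : M.Action, ∑ s', |P s a s' - P' s a s'|

variable {M : LayeredMDP}

lemma IsTransition.isSubTransition {P : M.State → M.Action → M.State → ℝ}
    (hP : M.IsTransition P) : M.IsSubTransition P :=
  ⟨hP.1, hP.2.1, fun s a hs => (hP.2.2 s a hs).le⟩

lemma IsSubTransition.sum_le_one {P : M.State → M.Action → M.State → ℝ}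
    (hP : M.IsSubTransition P) (s : M.State) (a : M.Action) : ∑ s', P s a s' ≤ 1 := by
  rcases lt_or_ge (M.layer s) M.L with hs | hs
  · exact hP.2.2 s a hs
  · have hzero : ∀ s', P s a s' = 0 := fun s' => by
      by_contra hne
      have := hP.2.1 s a s' hne
      have := M.layer_le s'
      omega
    simp [hzero]

lemma corruption_nonneg (P P' : M.State → M.Action → M.State → ℝ) (k : ℕ) :
    0 ≤ M.corruption P P' k :=
  Real.iSup_nonneg fun _ => Real.iSup_nonneg fun _ => Real.iSup_nonneg fun _ =>
    sum_nonneg fun _ _ => abs_nonneg _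

lemma sum_abs_sub_le_corruption (P P' : M.State → M.Action → M.State → ℝ) {s : M.State}
    (a : M.Action) : ∑ s', |P s a s' - P' s a s'| ≤ M.corruption P P' (M.layer s) :=
  calc ∑ s', |P s a s' - P' s a s'|
      ≤ ⨆ a, ∑ s', |P s a s' - P' s a s'| :=
        le_ciSup (f := fun a => ∑ s', |P s a s' - P' s a s'|) (Finite.bddAbove_range _) a
    _ = ⨆ (_ : s ∈ {t : M.State | M.layer t = M.layer s}), ⨆ a, ∑ s', |P s a s' - P' s a s'| :=
        (ciSup_pos (f := fun _ => ⨆ a, ∑ s', |P s a s' - P' s a s'|) rfl).symm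
    _ ≤ M.corruption P P' (M.layer s) :=
        le_ciSup (f := fun t => ⨆ (_ : t ∈ {t : M.State | M.layer t = M.layer s}),
          ⨆ a, ∑ s', |P t a s' - P' t a s'|) (Finite.bddAbove_range _) s

lemma sum_abs_push_le {Q : M.State → M.Action → M.State → ℝ} {π : M.State → M.Action → ℝ}
    (hπ : ∀ s a, 0 ≤ π s a) {d : M.State → ℝ} {C : ℝ}
    (hQ : ∀ s, d s ≠ 0 → ∑ a, π s a * ∑ s', |Q s a s'| ≤ C) :
    ∑ s, |M.push Q π d s| ≤ C * ∑ s, |d s| := by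
  calc ∑ s, |M.push Q π d s|
      ≤ ∑ s, ∑ s', ∑ a, |d s'| * π s' a * |Q s' a s| := by
        refine sum_le_sum fun s _ => (abs_sum_le_sum_abs _ _).trans <|
          sum_le_sum fun s' _ => (abs_sum_le_sum_abs _ _).trans_eq <| sum_congr rfl fun a _ => ?_
        rw [abs_mul, abs_mul, abs_of_nonneg (hπ s' a)]
    _ = ∑ s', |d s'| * ∑ a, π s' a * ∑ s, |Q s' a s| := by
        rw [sum_comm]
        refine sum_congr rfl fun s' _ => ?_
        simp only [mul_sum, sum_comm (γ := M.Action), mul_assoc]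
    _ ≤ ∑ s', C * |d s'| := sum_le_sum fun s' _ => by
        by_cases hd : d s' = 0
        · simp [hd]
        · rw [mul_comm C]
          exact mul_le_mul_of_nonneg_left (hQ s' hd) (abs_nonneg _)
    _ = C * ∑ s, |d s| := (mul_sum _ _ _).symm

lemma push_sub_push (P P' : M.State → M.Action → M.State → ℝ) (π : M.State → M.Action → ℝ)
    (d e : M.State → ℝ) (s : M.State) :
    M.push P π d s - M.push P' π e s = M.push P π (d - e) s + M.push (P - P') π e s := by
  simp only [push, ← sum_add_distrib, ← sum_sub_distrib, Pi.sub_apply]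
  exact sum_congr rfl fun _ _ => sum_congr rfl fun _ _ => by ring

lemma sum_abs_push_le_sum_abs {P : M.State → M.Action → M.State → ℝ}
    {π : M.State → M.Action → ℝ} (hP : M.IsSubTransition P) (hπ : M.IsPolicy π)
    (d : M.State → ℝ) : ∑ s, |M.push P π d s| ≤ ∑ s, |d s| := by
  refine (sum_abs_push_le hπ.1 (C := 1) fun s _ => ?_).trans_eq (one_mul _)
  calc ∑ a, π s a * ∑ s', |P s a s'|
      ≤ ∑ a, π s a * 1 := sum_le_sum fun a _ => by
        rw [sum_congr rfl fun s' _ => abs_of_nonneg (hP.1 s a s')]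
        exact mul_le_mul_of_nonneg_left (hP.sum_le_one s a) (hπ.1 s a)
    _ = 1 := by rw [← sum_mul, hπ.2 s, one_mul]

lemma sum_abs_push_sub_le_corruption (P P' : M.State → M.Action → M.State → ℝ)
    {π : M.State → M.Action → ℝ} (hπ : M.IsPolicy π) {e : M.State → ℝ} {k : ℕ}
    (he : ∀ s, e s ≠ 0 → M.layer s = k) :
    ∑ s, |M.push (P - P') π e s| ≤ M.corruption P P' k * ∑ s, |e s| := by
  refine sum_abs_push_le hπ.1 fun s hs => ?_
  calc ∑ a, π s a * ∑ s', |(P - P') s a s'|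
      ≤ ∑ a, π s a * M.corruption P P' k := sum_le_sum fun a _ => by
        rw [← he s hs]
        exact mul_le_mul_of_nonneg_left (sum_abs_sub_le_corruption P P' a) (hπ.1 s a)
    _ = M.corruption P P' k := by rw [← sum_mul, hπ.2 s, one_mul]

section occAuxFrom

variable {P : M.State → M.Action → M.State → ℝ} {π : M.State → M.Action → ℝ} {u : M.State}

lemma occAuxFrom_succ (n : ℕ) :
    M.occAuxFrom P π u (n + 1) = M.push P π (M.occAuxFrom P π u n) := rfl

lemma layer_eq_of_occAuxFrom_ne_zero (hP : ∀ s a s', P s a s' ≠ 0 → M.layer s' = M.layer s + 1)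
    {n : ℕ} {s : M.State} (hs : M.occAuxFrom P π u n s ≠ 0) : M.layer s = M.layer u + n := by
  induction n generalizing s with
  | zero =>
    by_cases h : s = u
    · rw [h, add_zero]
    · simp [occAuxFrom, h] at hs
  | succ n ih =>
    obtain ⟨s', -, hs'⟩ := exists_ne_zero_of_sum_ne_zero hs
    obtain ⟨a, -, ha⟩ := exists_ne_zero_of_sum_ne_zero hs'
    rw [hP s' a s (right_ne_zero_of_mul ha), ih (left_ne_zero_of_mul (left_ne_zero_of_mul ha)),
      add_assoc]

lemma sum_abs_occAuxFrom_le_one (hP : M.IsSubTransition P) (hπ : M.IsPolicy π) (n : ℕ) :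
    ∑ s, |M.occAuxFrom P π u n s| ≤ 1 := by
  induction n with
  | zero => simp [occAuxFrom, apply_ite abs]
  | succ n ih => exact (sum_abs_push_le_sum_abs hP hπ _).trans ih

lemma sum_abs_occAuxFrom_sub_le {P' : M.State → M.Action → M.State → ℝ}
    (hP : M.IsSubTransition P) (hP' : M.IsSubTransition P') (hπ : M.IsPolicy π) (n : ℕ) :
    ∑ s, |M.occAuxFrom P π u n s - M.occAuxFrom P' π u n s|
      ≤ ∑ k ∈ range n, M.corruption P P' (M.layer u + k) := by
  induction n with
  | zero => simp [occAuxFrom]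
  | succ n ih =>
    set f := M.occAuxFrom P π u n
    set g := M.occAuxFrom P' π u n
    calc ∑ s, |M.occAuxFrom P π u (n + 1) s - M.occAuxFrom P' π u (n + 1) s|
        = ∑ s, |M.push P π (f - g) s + M.push (P - P') π g s| := by
          simp only [occAuxFrom_succ, push_sub_push, f, g]
      _ ≤ ∑ s, |M.push P π (f - g) s| + ∑ s, |M.push (P - P') π g s| :=
          (sum_le_sum fun _ _ => abs_add_le _ _).trans_eq sum_add_distrib
      _ ≤ ∑ s, |f s - g s| + M.corruption P P' (M.layer u + n) * ∑ s, |g s| :=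
          add_le_add (sum_abs_push_le_sum_abs hP hπ _) <| sum_abs_push_sub_le_corruption P P' hπ
            fun _ hs => layer_eq_of_occAuxFrom_ne_zero hP'.2.1 hs
      _ ≤ ∑ k ∈ range n, M.corruption P P' (M.layer u + k)
            + M.corruption P P' (M.layer u + n) * 1 :=
          add_le_add ih <| mul_le_mul_of_nonneg_left (sum_abs_occAuxFrom_le_one hP' hπ n)
            (corruption_nonneg P P' _)
      _ = ∑ k ∈ range (n + 1), M.corruption P P' (M.layer u + k) := by
          rw [mul_one, sum_range_succ]

end occAuxFrom

lemma occState_eq_occAuxFrom (P : M.State → M.Action → M.State → ℝ) {π : M.State → M.Action → ℝ}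
    (hπ : ∀ s, ∑ a, π s a = 1) (s : M.State) :
    M.occState P π s = M.occAuxFrom P π M.s0 (M.layer s) s := by
  simp [occState, occ, occFrom, layer_s0, ← mul_sum, hπ s]

lemma sum_abs_occState_sub_le {P P' : M.State → M.Action → M.State → ℝ}
    {π : M.State → M.Action → ℝ} (hP : M.IsSubTransition P) (hP' : M.IsSubTransition P')
    (hπ : M.IsPolicy π) (k : ℕ) :
    ∑ s ∈ univ.filter (fun s => M.layer s = k), |M.occState P π s - M.occState P' π s|
      ≤ ∑ j ∈ range k, M.corruption P P' j := by
  calc ∑ s ∈ univ.filter (fun s => M.layer s = k), |M.occState P π s - M.occState P' π s|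
      = ∑ s ∈ univ.filter (fun s => M.layer s = k),
          |M.occAuxFrom P π M.s0 k s - M.occAuxFrom P' π M.s0 k s| :=
        sum_congr rfl fun s hs => by
          rw [occState_eq_occAuxFrom P hπ.2, occState_eq_occAuxFrom P' hπ.2, (mem_filter.1 hs).2]
    _ ≤ ∑ s, |M.occAuxFrom P π M.s0 k s - M.occAuxFrom P' π M.s0 k s| :=
        sum_le_sum_of_subset_of_nonneg (subset_univ _) fun _ _ _ => abs_nonneg _
    _ ≤ ∑ j ∈ range k, M.corruption P P' j := by
        simpa [layer_s0] using sum_abs_occAuxFrom_sub_le (u := M.s0) hP hP' hπ k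

lemma layer_lt_of_ne_sL {s : M.State} (hs : s ≠ M.sL) : M.layer s < M.L :=
  (M.layer_le s).lt_of_ne fun h => hs (M.eq_sL_of_layer s h)

end LayeredMDP

open LayeredMDP in
/-- **Occupancy difference under transition corruption (Corollary D.16).**
For transition functions `P, P'` and
`c = Σ_{k<L} max_{(s,a) ∈ S_k×A} ‖P(·|s,a) − P'(·|s,a)‖₁`,
for every stochastic policy `π`:
(i) `|q^{P,π}(s) − q^{P',π}(s)| ≤ c` for every state `s ≠ s_L`, and
(ii) `Σ_{s ≠ s_L} |q^{P,π}(s) − q^{P',π}(s)| ≤ L·c`. -/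
theorem occupancy_diff_corruption (M : LayeredMDP)
    (P P' : M.State → M.Action → M.State → ℝ)
    (hP : M.IsTransition P) (hP' : M.IsTransition P')
    (π : M.State → M.Action → ℝ) (hπ : M.IsPolicy π)
    (c : ℝ)
    (hc : c = ∑ k ∈ Finset.range M.L,
      ⨆ s ∈ {s : M.State | M.layer s = k}, ⨆ a : M.Action,
        ∑ s', |P s a s' - P' s a s'|) :
    (∀ s, s ≠ M.sL → |M.occState P π s - M.occState P' π s| ≤ c) ∧
      (∑ s ∈ Finset.univ.filter (fun s => s ≠ M.sL),
          |M.occState P π s - M.occState P' π s| ≤ (M.L : ℝ) * c) := by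
  have hsub := hP.isSubTransition
  have hsub' := hP'.isSubTransition
  have hlayer : ∀ k ≤ M.L, ∑ s ∈ univ.filter (fun s => M.layer s = k),
      |M.occState P π s - M.occState P' π s| ≤ c := fun k hk =>
    (sum_abs_occState_sub_le hsub hsub' hπ k).trans <| hc ▸
      sum_le_sum_of_subset_of_nonneg (range_subset_range.2 hk) fun j _ _ =>
        corruption_nonneg P P' j
  refine ⟨fun s _ => ?_, ?_⟩
  · exact (single_le_sum (s := univ.filter fun t => M.layer t = M.layer s)
      (f := fun t => |M.occState P π t - M.occState P' π t|)
      (fun _ _ => abs_nonneg _) (mem_filter.2 ⟨mem_univ s, rfl⟩)).trans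
      (hlayer _ (M.layer_le s))
  · have hmaps : ∀ s ∈ univ.filter (fun s => s ≠ M.sL), M.layer s ∈ range M.L :=
      fun s hs => mem_range.2 (layer_lt_of_ne_sL (mem_filter.1 hs).2)
    calc ∑ s ∈ univ.filter (fun s => s ≠ M.sL), |M.occState P π s - M.occState P' π s|
        = ∑ k ∈ range M.L, ∑ s ∈ univ.filter (fun s => s ≠ M.sL) with M.layer s = k,
            |M.occState P π s - M.occState P' π s| := (sum_fiberwise_of_maps_to hmaps _).symm
      _ ≤ ∑ _k ∈ range M.L, c := sum_le_sum fun k hk =>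
          (sum_le_sum_of_subset_of_nonneg (filter_subset_filter _ (subset_univ _))
            fun _ _ _ => abs_nonneg _).trans (hlayer k (mem_range.1 hk).le)
      _ = M.L * c := by rw [sum_const, card_range, nsmul_eq_mul]
end

section
/- Let P be a transition function on a layered episodic MDP, and for t = 1,…,T let P_t be transition functions, π_t stochastic policies, and ℓ_t : S×A → [0,1] loss functions. Set c_t = Σ_{k=0}^{L-1} max_{(s,a)∈S_k×A} ‖P(·|s,a) − P_t(·|s,a)‖₁. Then Σ_{t=1}^T |⟨q^{P,π_t} − q^{P_t,π_t}, ℓ_t⟩| ≤ L·Σ_{t=1}^T c_t. -/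
open Finset

namespace LayeredMDP

variable {M : LayeredMDP}

lemma occAux_nonneg {P : M.State → M.Action → M.State → ℝ} {π : M.State → M.Action → ℝ}
    (hP : ∀ s a s', 0 ≤ P s a s') (hπ : ∀ s a, 0 ≤ π s a) (u : M.State) :
    ∀ n s, 0 ≤ M.occAuxFrom P π u n s := by
  intro n
  induction n with
  | zero => intro s; simp only [occAuxFrom]; split <;> norm_num
  | succ n ih =>
    intro s
    simp only [occAuxFrom]
    refine Finset.sum_nonneg fun s' _ => Finset.sum_nonneg fun a' _ => ?_
    exact mul_nonneg (mul_nonneg (ih s') (hπ s' a')) (hP s' a' s)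

lemma occAux_support {P : M.State → M.Action → M.State → ℝ} {π : M.State → M.Action → ℝ}
    (hP : ∀ s a s', P s a s' ≠ 0 → M.layer s' = M.layer s + 1) :
    ∀ n s, M.occAuxFrom P π M.s0 n s ≠ 0 → M.layer s = n := by
  intro n
  induction n with
  | zero =>
    intro s hs
    by_cases h : s = M.s0
    · rw [h, M.layer_s0]
    · simp only [occAuxFrom, if_neg h] at hs; exact absurd rfl hs
  | succ n ih =>
    intro s hs
    simp only [occAuxFrom] at hs
    obtain ⟨s', -, h1⟩ := Finset.exists_ne_zero_of_sum_ne_zero hs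
    obtain ⟨a', -, h2⟩ := Finset.exists_ne_zero_of_sum_ne_zero h1
    have hne : M.occAuxFrom P π M.s0 n s' ≠ 0 ∧ P s' a' s ≠ 0 := by
      constructor
      · intro h0; apply h2; rw [h0]; ring
      · intro h0; apply h2; rw [h0]; ring
    rw [hP s' a' s hne.2, ih s' hne.1]

lemma occAux_mass {P : M.State → M.Action → M.State → ℝ} {π : M.State → M.Action → ℝ}
    (hP : M.IsTransition P) (hπ : M.IsPolicy π) :
    ∀ n, n ≤ M.L → ∑ s, M.occAuxFrom P π M.s0 n s ≤ 1 := by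
  intro n
  induction n with
  | zero => intro _; simp [occAuxFrom]
  | succ n ih =>
    intro hn
    have hn' : n < M.L := lt_of_lt_of_le (Nat.lt_succ_self n) hn
    have step : ∑ s, M.occAuxFrom P π M.s0 (n+1) s
        = ∑ s', ∑ a', M.occAuxFrom P π M.s0 n s' * π s' a' * ∑ s, P s' a' s := by
      simp only [occAuxFrom]
      rw [Finset.sum_comm]
      refine Finset.sum_congr rfl fun s' _ => ?_
      rw [Finset.sum_comm]
      refine Finset.sum_congr rfl fun a' _ => ?_
      rw [← Finset.mul_sum]
    rw [step]
    have hb : ∑ s', ∑ a', M.occAuxFrom P π M.s0 n s' * π s' a' * ∑ s, P s' a' s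
        ≤ ∑ s', ∑ a', M.occAuxFrom P π M.s0 n s' * π s' a' := by
      refine Finset.sum_le_sum fun s' _ => Finset.sum_le_sum fun a' _ => ?_
      by_cases h0 : M.occAuxFrom P π M.s0 n s' = 0
      · simp [h0]
      · have hl : M.layer s' = n := occAux_support hP.2.1 n s' h0
        rw [hP.2.2 s' a' (hl ▸ hn')]
        rw [mul_one]
    refine hb.trans ?_
    calc ∑ s', ∑ a', M.occAuxFrom P π M.s0 n s' * π s' a'
        = ∑ s', M.occAuxFrom P π M.s0 n s' := by
          refine Finset.sum_congr rfl fun s' _ => ?_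
          rw [← Finset.mul_sum, hπ.2 s', mul_one]
      _ ≤ 1 := ih (le_of_lt hn')

lemma key (M : LayeredMDP) (P P' : M.State → M.Action → M.State → ℝ)
    (hP : M.IsTransition P) (hP' : M.IsTransition P')
    (π : M.State → M.Action → ℝ) (hπ : M.IsPolicy π)
    (ℓ : M.State → M.Action → ℝ) (hℓ : ∀ s a, ℓ s a ∈ Set.Icc (0:ℝ) 1) :
    |∑ s ∈ Finset.univ.filter (fun s => s ≠ M.sL), ∑ a,
        (M.occ P π s a - M.occ P' π s a) * ℓ s a|
      ≤ (M.L : ℝ) * ∑ k ∈ Finset.range M.L,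
          ⨆ s ∈ {s : M.State | M.layer s = k}, ⨆ a : M.Action,
            ∑ s', |P s a s' - P' s a s'| := by
  set ε : ℕ → ℝ := fun k => ⨆ s ∈ {s : M.State | M.layer s = k}, ⨆ a : M.Action,
      ∑ s', |P s a s' - P' s a s'| with hε
  set f : ℕ → M.State → ℝ := fun n => M.occAuxFrom P π M.s0 n with hf
  set g : ℕ → M.State → ℝ := fun n => M.occAuxFrom P' π M.s0 n with hg
  set D : ℕ → ℝ := fun n => ∑ s, |f n s - g n s| with hD
  -- ε is nonnegative
  have hε0 : ∀ k, 0 ≤ ε k := by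
    intro k
    refine Real.iSup_nonneg fun s => Real.iSup_nonneg fun _ => Real.iSup_nonneg fun a => ?_
    exact Finset.sum_nonneg fun s' _ => abs_nonneg _
  -- ε bounds the ℓ¹ distance at each layer
  have hεb : ∀ k s a, M.layer s = k → ∑ s', |P s a s' - P' s a s'| ≤ ε k := by
    intro k s a hk
    have hb1 : BddAbove (Set.range fun a : M.Action => ∑ s', |P s a s' - P' s a s'|) :=
      (Set.finite_range _).bddAbove
    have h1 : ∑ s', |P s a s' - P' s a s'| ≤ ⨆ a : M.Action, ∑ s', |P s a s' - P' s a s'| :=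
      le_ciSup hb1 a
    have h2 : (⨆ a : M.Action, ∑ s', |P s a s' - P' s a s'|)
        = ⨆ (_ : s ∈ {s : M.State | M.layer s = k}), ⨆ a : M.Action, ∑ s', |P s a s' - P' s a s'| :=
      (ciSup_pos (f := fun _ => ⨆ a : M.Action, ∑ s', |P s a s' - P' s a s'|) hk).symm
    have hb2 : BddAbove (Set.range fun s : M.State =>
        ⨆ (_ : s ∈ {s : M.State | M.layer s = k}), ⨆ a : M.Action,
          ∑ s', |P s a s' - P' s a s'|) := (Set.finite_range _).bddAbove
    calc ∑ s', |P s a s' - P' s a s'|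
        ≤ ⨆ (_ : s ∈ {s : M.State | M.layer s = k}), ⨆ a : M.Action,
            ∑ s', |P s a s' - P' s a s'| := h2 ▸ h1
      _ ≤ ε k := le_ciSup hb2 s
  have hD0 : D 0 = 0 := by
    simp only [hD, hf, hg, occAuxFrom]
    simp
  -- the one-step recursion
  have hstep : ∀ n, n < M.L → D (n+1) ≤ D n + ε n := by
    intro n hn
    have hdiff : ∀ s, f (n+1) s - g (n+1) s = ∑ s', ∑ a',
        ((f n s' - g n s') * π s' a' * P s' a' s
          + g n s' * π s' a' * (P s' a' s - P' s' a' s)) := by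
      intro s
      simp only [hf, hg, occAuxFrom]
      rw [← Finset.sum_sub_distrib]
      refine Finset.sum_congr rfl fun s' _ => ?_
      rw [← Finset.sum_sub_distrib]
      refine Finset.sum_congr rfl fun a' _ => ?_
      ring
    have habs : ∀ s, |f (n+1) s - g (n+1) s| ≤ ∑ s', ∑ a',
        (|f n s' - g n s'| * π s' a' * P s' a' s
          + g n s' * π s' a' * |P s' a' s - P' s' a' s|) := by
      intro s
      rw [hdiff s]
      refine (Finset.abs_sum_le_sum_abs _ _).trans (Finset.sum_le_sum fun s' _ => ?_)
      refine (Finset.abs_sum_le_sum_abs _ _).trans (Finset.sum_le_sum fun a' _ => ?_)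
      refine (abs_add_le _ _).trans ?_
      have h1 : |(f n s' - g n s') * π s' a' * P s' a' s|
          = |f n s' - g n s'| * π s' a' * P s' a' s := by
        rw [abs_mul, abs_mul, abs_of_nonneg (hπ.1 s' a'), abs_of_nonneg (hP.1 s' a' s)]
      have h2 : |g n s' * π s' a' * (P s' a' s - P' s' a' s)|
          = g n s' * π s' a' * |P s' a' s - P' s' a' s| := by
        rw [abs_mul, abs_mul,
          abs_of_nonneg (occAux_nonneg hP'.1 hπ.1 M.s0 n s'), abs_of_nonneg (hπ.1 s' a')]
      rw [h1, h2]
    calc D (n+1) ≤ ∑ s, ∑ s', ∑ a',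
          (|f n s' - g n s'| * π s' a' * P s' a' s
            + g n s' * π s' a' * |P s' a' s - P' s' a' s|) :=
        Finset.sum_le_sum fun s _ => habs s
      _ = ∑ s', ∑ a',
          (|f n s' - g n s'| * π s' a' * ∑ s, P s' a' s
            + g n s' * π s' a' * ∑ s, |P s' a' s - P' s' a' s|) := by
        rw [Finset.sum_comm]
        refine Finset.sum_congr rfl fun s' _ => ?_
        rw [Finset.sum_comm]
        refine Finset.sum_congr rfl fun a' _ => ?_
        rw [Finset.sum_add_distrib, ← Finset.mul_sum, ← Finset.mul_sum]
      _ ≤ ∑ s', ∑ a',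
          (|f n s' - g n s'| * π s' a' * 1 + g n s' * π s' a' * ε n) := by
        refine Finset.sum_le_sum fun s' _ => Finset.sum_le_sum fun a' _ => ?_
        by_cases hl : M.layer s' = n
        · have hlt : M.layer s' < M.L := hl ▸ hn
          rw [hP.2.2 s' a' hlt]
          refine add_le_add le_rfl ?_
          exact mul_le_mul_of_nonneg_left (hεb n s' a' hl)
            (mul_nonneg (occAux_nonneg hP'.1 hπ.1 M.s0 n s') (hπ.1 s' a'))
        · have hfz : f n s' = 0 := by
            by_contra h; exact hl (occAux_support hP.2.1 n s' h)
          have hgz : g n s' = 0 := by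
            by_contra h; exact hl (occAux_support hP'.2.1 n s' h)
          rw [hfz, hgz]
          simp
      _ = D n + (∑ s', g n s') * ε n := by
        have hinner : ∀ s', ∑ a', (|f n s' - g n s'| * π s' a' * 1 + g n s' * π s' a' * ε n)
            = |f n s' - g n s'| + g n s' * ε n := by
          intro s'
          rw [Finset.sum_add_distrib]
          congr 1
          · simp only [mul_one]
            rw [← Finset.mul_sum, hπ.2 s', mul_one]
          · rw [← Finset.sum_mul, ← Finset.mul_sum, hπ.2 s', mul_one]
        rw [Finset.sum_congr rfl fun s' _ => hinner s', Finset.sum_add_distrib,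
          Finset.sum_mul]
      _ ≤ D n + ε n := by
        refine add_le_add le_rfl ?_
        calc (∑ s', g n s') * ε n ≤ 1 * ε n :=
            mul_le_mul_of_nonneg_right (occAux_mass hP' hπ n (le_of_lt hn)) (hε0 n)
          _ = ε n := one_mul _
  -- cumulative bound
  have hDle : ∀ n, n ≤ M.L → D n ≤ ∑ j ∈ Finset.range n, ε j := by
    intro n
    induction n with
    | zero => intro _; simp [hD0]
    | succ n ih =>
      intro hn
      have hn' : n < M.L := lt_of_lt_of_le (Nat.lt_succ_self n) hn
      calc D (n+1) ≤ D n + ε n := hstep n hn'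
        _ ≤ (∑ j ∈ Finset.range n, ε j) + ε n := add_le_add (ih (le_of_lt hn')) le_rfl
        _ = ∑ j ∈ Finset.range (n+1), ε j := (Finset.sum_range_succ ε n).symm
  have hDc : ∀ k, k < M.L → D k ≤ ∑ j ∈ Finset.range M.L, ε j := by
    intro k hk
    refine (hDle k (le_of_lt hk)).trans ?_
    exact Finset.sum_le_sum_of_subset_of_nonneg
      (Finset.range_subset_range.2 (le_of_lt hk)) (fun j _ _ => hε0 j)
  have hocc : ∀ s a, M.occ P π s a = f (M.layer s) s * π s a := by
    intro s a
    simp [LayeredMDP.occ, LayeredMDP.occFrom, M.layer_s0, hf]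
  have hocc' : ∀ s a, M.occ P' π s a = g (M.layer s) s * π s a := by
    intro s a
    simp [LayeredMDP.occ, LayeredMDP.occFrom, M.layer_s0, hg]
  have hmaps : ∀ s ∈ Finset.univ.filter (fun s => s ≠ M.sL),
      M.layer s ∈ Finset.range M.L := by
    intro s hs
    simp only [Finset.mem_filter] at hs
    rw [Finset.mem_range]
    rcases lt_or_eq_of_le (M.layer_le s) with h | h
    · exact h
    · exact absurd (M.eq_sL_of_layer s h) hs.2
  calc |∑ s ∈ Finset.univ.filter (fun s => s ≠ M.sL), ∑ a,
          (M.occ P π s a - M.occ P' π s a) * ℓ s a|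
      ≤ ∑ s ∈ Finset.univ.filter (fun s => s ≠ M.sL), |∑ a,
          (M.occ P π s a - M.occ P' π s a) * ℓ s a| := Finset.abs_sum_le_sum_abs _ _
    _ ≤ ∑ s ∈ Finset.univ.filter (fun s => s ≠ M.sL), ∑ a,
          |(M.occ P π s a - M.occ P' π s a) * ℓ s a| :=
        Finset.sum_le_sum fun s _ => Finset.abs_sum_le_sum_abs _ _
    _ ≤ ∑ s ∈ Finset.univ.filter (fun s => s ≠ M.sL), ∑ a,
          |M.occ P π s a - M.occ P' π s a| := by
        refine Finset.sum_le_sum fun s _ => Finset.sum_le_sum fun a _ => ?_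
        obtain ⟨h0, h1⟩ := hℓ s a
        rw [abs_mul]
        calc |M.occ P π s a - M.occ P' π s a| * |ℓ s a|
            ≤ |M.occ P π s a - M.occ P' π s a| * 1 :=
              mul_le_mul_of_nonneg_left (abs_le.2 ⟨by linarith, h1⟩) (abs_nonneg _)
          _ = _ := mul_one _
    _ = ∑ s ∈ Finset.univ.filter (fun s => s ≠ M.sL),
          |f (M.layer s) s - g (M.layer s) s| := by
        refine Finset.sum_congr rfl fun s _ => ?_
        have hterm : ∀ a, |M.occ P π s a - M.occ P' π s a|
            = |f (M.layer s) s - g (M.layer s) s| * π s a := by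
          intro a
          rw [hocc s a, hocc' s a, ← sub_mul, abs_mul, abs_of_nonneg (hπ.1 s a)]
        rw [Finset.sum_congr rfl fun a _ => hterm a, ← Finset.mul_sum, hπ.2 s, mul_one]
    _ ≤ ∑ k ∈ Finset.range M.L, D k := by
        rw [← Finset.sum_fiberwise_of_maps_to hmaps
          (fun s => |f (M.layer s) s - g (M.layer s) s|)]
        refine Finset.sum_le_sum fun k _ => ?_
        calc ∑ s ∈ (Finset.univ.filter (fun s => s ≠ M.sL)).filter
                (fun s => M.layer s = k), |f (M.layer s) s - g (M.layer s) s|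
            = ∑ s ∈ (Finset.univ.filter (fun s => s ≠ M.sL)).filter
                (fun s => M.layer s = k), |f k s - g k s| := by
              refine Finset.sum_congr rfl fun s hs => ?_
              rw [(Finset.mem_filter.1 hs).2]
          _ ≤ ∑ s, |f k s - g k s| :=
              Finset.sum_le_univ_sum_of_nonneg fun s => abs_nonneg _
          _ = D k := rfl
    _ ≤ ∑ _k ∈ Finset.range M.L, ∑ j ∈ Finset.range M.L, ε j :=
        Finset.sum_le_sum fun k hk => hDc k (Finset.mem_range.1 hk)
    _ = (M.L : ℝ) * ∑ j ∈ Finset.range M.L, ε j := by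
        rw [Finset.sum_const, Finset.card_range, nsmul_eq_mul]


end LayeredMDP

open LayeredMDP in
/-- **Total loss difference under transition corruption (Corollary D.17).**
For a transition function `P`, corrupted transitions `P_t`, policies `π_t` and
losses `ℓ_t : S×A → [0,1]`, with
`c_t = Σ_{k<L} max_{(s,a) ∈ S_k×A} ‖P(·|s,a) − P_t(·|s,a)‖₁`, one has
`Σ_t |⟨q^{P,π_t} − q^{P_t,π_t}, ℓ_t⟩| ≤ L · Σ_t c_t`. -/
theorem total_loss_diff_corruption (M : LayeredMDP) (T : ℕ)
    (P : M.State → M.Action → M.State → ℝ) (hP : M.IsTransition P)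
    (Pt : Fin T → M.State → M.Action → M.State → ℝ)
    (hPt : ∀ t, M.IsTransition (Pt t))
    (π : Fin T → M.State → M.Action → ℝ) (hπ : ∀ t, M.IsPolicy (π t))
    (ℓ : Fin T → M.State → M.Action → ℝ)
    (hℓ : ∀ t s a, ℓ t s a ∈ Set.Icc (0 : ℝ) 1)
    (c : Fin T → ℝ)
    (hc : ∀ t, c t = ∑ k ∈ Finset.range M.L,
      ⨆ s ∈ {s : M.State | M.layer s = k}, ⨆ a : M.Action,
        ∑ s', |P s a s' - Pt t s a s'|) :
    ∑ t, |∑ s ∈ Finset.univ.filter (fun s => s ≠ M.sL), ∑ a,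
        (M.occ P (π t) s a - M.occ (Pt t) (π t) s a) * ℓ t s a|
      ≤ (M.L : ℝ) * ∑ t, c t := by
  calc ∑ t, |∑ s ∈ Finset.univ.filter (fun s => s ≠ M.sL), ∑ a,
          (M.occ P (π t) s a - M.occ (Pt t) (π t) s a) * ℓ t s a|
      ≤ ∑ t, (M.L : ℝ) * c t := by
        refine Finset.sum_le_sum fun t _ => ?_
        rw [hc t]
        exact LayeredMDP.key M P (Pt t) hP (hPt t) (π t) (hπ t) (ℓ t) (hℓ t)
    _ = (M.L : ℝ) * ∑ t, c t := (Finset.mul_sum _ _ _).symm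
end

section
/- Let P̂ be a (possibly substochastic) transition on a layered episodic MDP and π a stochastic policy. Let ℓ : S×A → [0,1], let I : S×A → {0,1} satisfy Σ_{(x,y)∈S_h×A} I(x,y) ≤ 1 for every layer h < L, and let u : S×A → (0,∞) satisfy u(x,y) ≥ q^{P̂,π}(x,y) for all (x,y). Define ℓ̂(x,y) = I(x,y)·ℓ(x,y)/u(x,y). Then for every state-action pair (s,a): q^{P̂,π}(s,a)·Q^{P̂,π}(s,a;ℓ̂) ≤ L, q^{P̂,π}(s)·V^{P̂,π}(s;ℓ̂) ≤ L, and consequently q^{P̂,π}(s,a)·(Q^{P̂,π}(s,a;ℓ̂) − V^{P̂,π}(s;ℓ̂)) ∈ [−L, L]. -/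
open Finset

section Aux

variable {M : LayeredMDP} {P : M.State → M.Action → M.State → ℝ}
  {π : M.State → M.Action → ℝ}

lemma aux_occAux_nonneg (hP : ∀ s a s', 0 ≤ P s a s') (hπ : ∀ s a, 0 ≤ π s a) :
    ∀ n s, 0 ≤ M.occAuxFrom P π M.s0 n s := by
  intro n
  induction n with
  | zero =>
      intro s
      simp only [LayeredMDP.occAuxFrom]
      split <;> norm_num
  | succ n ih =>
      intro s
      simp only [LayeredMDP.occAuxFrom]
      exact Finset.sum_nonneg fun s' _ => Finset.sum_nonneg fun a' _ =>
        mul_nonneg (mul_nonneg (ih s') (hπ s' a')) (hP s' a' s)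

lemma aux_occAux_layer (hlay : ∀ s a s', P s a s' ≠ 0 → M.layer s' = M.layer s + 1) :
    ∀ n s, M.occAuxFrom P π M.s0 n s ≠ 0 → M.layer s = n := by
  intro n
  induction n with
  | zero =>
      intro s h
      simp only [LayeredMDP.occAuxFrom] at h
      by_cases hs : s = M.s0
      · rw [hs, M.layer_s0]
      · simp [hs] at h
  | succ n ih =>
      intro s h
      simp only [LayeredMDP.occAuxFrom] at h
      obtain ⟨s', -, h1⟩ := Finset.exists_ne_zero_of_sum_ne_zero h
      obtain ⟨a', -, h2⟩ := Finset.exists_ne_zero_of_sum_ne_zero h1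
      have hPne : P s' a' s ≠ 0 := fun hz => h2 (by rw [hz, mul_zero])
      have hone : M.occAuxFrom P π M.s0 n s' ≠ 0 :=
        fun hz => h2 (by rw [hz, zero_mul, zero_mul])
      rw [hlay s' a' s hPne, ih s' hone]

lemma aux_occ_eq (s : M.State) (a : M.Action) :
    M.occ P π s a = M.occAuxFrom P π M.s0 (M.layer s) s * π s a := by
  simp [LayeredMDP.occ, LayeredMDP.occFrom, M.layer_s0]

lemma aux_occ_nonneg (hP : ∀ s a s', 0 ≤ P s a s') (hπ : ∀ s a, 0 ≤ π s a)
    (s : M.State) (a : M.Action) : 0 ≤ M.occ P π s a := by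
  rw [aux_occ_eq]
  exact mul_nonneg (aux_occAux_nonneg hP hπ _ _) (hπ s a)

lemma aux_occState_nonneg (hP : ∀ s a s', 0 ≤ P s a s') (hπ : ∀ s a, 0 ≤ π s a)
    (s : M.State) : 0 ≤ M.occState P π s :=
  Finset.sum_nonneg fun a _ => aux_occ_nonneg hP hπ s a

lemma aux_occState_eq (hπ1 : ∀ s, ∑ a, π s a = 1) (s : M.State) :
    M.occState P π s = M.occAuxFrom P π M.s0 (M.layer s) s := by
  simp only [LayeredMDP.occState, aux_occ_eq, ← Finset.mul_sum, hπ1, mul_one]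

lemma aux_flow (hlay : ∀ s a s', P s a s' ≠ 0 → M.layer s' = M.layer s + 1)
    (hπ1 : ∀ s, ∑ a, π s a = 1) (s' : M.State) (h1 : 1 ≤ M.layer s') :
    M.occState P π s' = ∑ s, ∑ a, M.occ P π s a * P s a s' := by
  obtain ⟨n, hn⟩ : ∃ n, M.layer s' = n + 1 := ⟨M.layer s' - 1, by omega⟩
  rw [aux_occState_eq hπ1, hn]
  simp only [LayeredMDP.occAuxFrom]
  refine Finset.sum_congr rfl fun s _ => Finset.sum_congr rfl fun a _ => ?_
  rw [aux_occ_eq]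
  by_cases hz : P s a s' = 0
  · simp [hz]
  · have h2 : M.layer s = n := by have := hlay s a s' hz; omega
    rw [h2]

lemma aux_occ_mul_le (hP : ∀ s a s', 0 ≤ P s a s') (hπ : ∀ s a, 0 ≤ π s a)
    (hlay : ∀ s a s', P s a s' ≠ 0 → M.layer s' = M.layer s + 1)
    (hπ1 : ∀ s, ∑ a, π s a = 1) (s : M.State) (a : M.Action) (s' : M.State)
    (h1 : 1 ≤ M.layer s') :
    M.occ P π s a * P s a s' ≤ M.occState P π s' := by
  rw [aux_flow hlay hπ1 s' h1]
  calc M.occ P π s a * P s a s' ≤ ∑ b, M.occ P π s b * P s b s' :=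
        Finset.single_le_sum
          (fun b _ => mul_nonneg (aux_occ_nonneg hP hπ s b) (hP s b s'))
          (Finset.mem_univ a)
    _ ≤ ∑ x, ∑ b, M.occ P π x b * P x b s' :=
        Finset.single_le_sum
          (fun x _ => Finset.sum_nonneg fun b _ =>
            mul_nonneg (aux_occ_nonneg hP hπ x b) (hP x b s'))
          (Finset.mem_univ s)

lemma aux_valAux_nonneg {ℓh : M.State → M.Action → ℝ} (hπ : ∀ s a, 0 ≤ π s a)
    (hP : ∀ s a s', 0 ≤ P s a s') (hℓ : ∀ s a, 0 ≤ ℓh s a) :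
    ∀ n s, 0 ≤ M.valAux P π ℓh n s := by
  intro n
  induction n with
  | zero => intro s; simp [LayeredMDP.valAux]
  | succ n ih =>
      intro s
      simp only [LayeredMDP.valAux]
      refine Finset.sum_nonneg fun a _ => mul_nonneg (hπ s a) (add_nonneg (hℓ s a) ?_)
      exact Finset.sum_nonneg fun s' _ => mul_nonneg (hP s a s') (ih s')

lemma aux_layer_bound (hP : M.IsSubTransition P) (hπ : M.IsPolicy π)
    {ℓh : M.State → M.Action → ℝ} (hℓnn : ∀ s a, 0 ≤ ℓh s a)
    (hsum : ∀ h, h < M.L →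
      ∑ s ∈ Finset.univ.filter (fun s => M.layer s = h), ∑ a, M.occ P π s a * ℓh s a ≤ 1) :
    ∀ m, m ≤ M.L →
      ∑ s ∈ Finset.univ.filter (fun s => M.layer s = M.L - m),
        M.occState P π s * M.valAux P π ℓh m s ≤ (m : ℝ) := by
  intro m
  induction m with
  | zero =>
      intro _
      simp [LayeredMDP.valAux]
  | succ m ih =>
      intro hm
      have hmL : m ≤ M.L := by omega
      have hterm : ∀ s ∈ Finset.univ.filter (fun s => M.layer s = M.L - (m + 1)),
          M.occState P π s * M.valAux P π ℓh (m + 1) s =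
          (∑ a, M.occ P π s a * ℓh s a) +
          ∑ a, ∑ s', M.occ P π s a * P s a s' * M.valAux P π ℓh m s' := by
        intro s _
        simp only [LayeredMDP.valAux]
        simp only [mul_assoc, ← Finset.mul_sum]
        rw [aux_occState_eq hπ.2]
        simp only [aux_occ_eq]
        rw [Finset.mul_sum, ← Finset.sum_add_distrib]
        exact Finset.sum_congr rfl fun x _ => by ring
      rw [Finset.sum_congr rfl hterm, Finset.sum_add_distrib]
      have hA : ∑ s ∈ Finset.univ.filter (fun s => M.layer s = M.L - (m + 1)),
          ∑ a, M.occ P π s a * ℓh s a ≤ 1 := hsum _ (by omega)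
      have hclaim : ∀ s' : M.State,
          (∑ s ∈ Finset.univ.filter (fun s => M.layer s = M.L - (m + 1)),
            ∑ a, M.occ P π s a * P s a s') =
          if M.layer s' = M.L - m then M.occState P π s' else 0 := by
        intro s'
        by_cases hc : M.layer s' = M.L - m
        · rw [if_pos hc, aux_flow hP.2.1 hπ.2 s' (by omega)]
          apply Finset.sum_filter_of_ne
          intro s _ hne
          obtain ⟨a, -, ha⟩ := Finset.exists_ne_zero_of_sum_ne_zero hne
          have hPz : P s a s' ≠ 0 := fun hz => ha (by rw [hz, mul_zero])
          have := hP.2.1 s a s' hPz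
          omega
        · rw [if_neg hc]
          refine Finset.sum_eq_zero fun s hs => Finset.sum_eq_zero fun a _ => ?_
          rw [Finset.mem_filter] at hs
          by_cases hz : P s a s' = 0
          · rw [hz, mul_zero]
          · have h3 := hP.2.1 s a s' hz
            exact absurd (by omega : M.layer s' = M.L - m) hc
      have hB : ∑ s ∈ Finset.univ.filter (fun s => M.layer s = M.L - (m + 1)),
          ∑ a, ∑ s', M.occ P π s a * P s a s' * M.valAux P π ℓh m s' ≤ (m : ℝ) := by
        calc ∑ s ∈ Finset.univ.filter (fun s => M.layer s = M.L - (m + 1)),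
              ∑ a, ∑ s', M.occ P π s a * P s a s' * M.valAux P π ℓh m s'
            = ∑ s ∈ Finset.univ.filter (fun s => M.layer s = M.L - (m + 1)),
              ∑ s', ∑ a, M.occ P π s a * P s a s' * M.valAux P π ℓh m s' :=
              Finset.sum_congr rfl fun s _ => Finset.sum_comm
          _ = ∑ s', ∑ s ∈ Finset.univ.filter (fun s => M.layer s = M.L - (m + 1)),
              ∑ a, M.occ P π s a * P s a s' * M.valAux P π ℓh m s' := Finset.sum_comm
          _ = ∑ s', (∑ s ∈ Finset.univ.filter (fun s => M.layer s = M.L - (m + 1)),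
              ∑ a, M.occ P π s a * P s a s') * M.valAux P π ℓh m s' := by
              simp only [Finset.sum_mul]
          _ = ∑ s' ∈ Finset.univ.filter (fun s' => M.layer s' = M.L - m),
              M.occState P π s' * M.valAux P π ℓh m s' := by
              simp only [hclaim, ite_mul, zero_mul]
              exact (Finset.sum_filter _ _).symm
          _ ≤ (m : ℝ) := ih hmL
      push_cast
      linarith

end Aux
open LayeredMDP in
/-- **Bounds on importance-weighted values (first part of Lemma D.5).**
For a substochastic transition `P̂`, a policy `π`, a loss `ℓ : S×A → [0,1]`,
a trajectory indicator `I` (`{0,1}`-valued, at most one nonzero entry per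
layer) and an upper occupancy bound `u > 0` with `q^{P̂,π} ≤ u`, the
the importance-weighted loss `ℓ̂(x,y) = I(x,y)·ℓ(x,y)/u(x,y)` satisfies
`q^{P̂,π}(s,a)·Q^{P̂,π}(s,a;ℓ̂) ≤ L`, `q^{P̂,π}(s)·V^{P̂,π}(s;ℓ̂) ≤ L`,
and `q^{P̂,π}(s,a)·(Q^{P̂,π}(s,a;ℓ̂) − V^{P̂,π}(s;ℓ̂)) ∈ [−L, L]`. -/
theorem importance_weighted_value_bounds (M : LayeredMDP)
    (Phat : M.State → M.Action → M.State → ℝ) (hPhat : M.IsSubTransition Phat)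
    (π : M.State → M.Action → ℝ) (hπ : M.IsPolicy π)
    (ℓ : M.State → M.Action → ℝ) (hℓ : ∀ s a, ℓ s a ∈ Set.Icc (0 : ℝ) 1)
    (I : M.State → M.Action → ℝ) (hI01 : ∀ s a, I s a = 0 ∨ I s a = 1)
    (hIsum : ∀ h, h < M.L →
      ∑ x ∈ Finset.univ.filter (fun x => M.layer x = h), ∑ y, I x y ≤ 1)
    (u : M.State → M.Action → ℝ)
    (hu : ∀ x y, 0 < u x y ∧ M.occ Phat π x y ≤ u x y) :
    ∀ s a,
      M.occ Phat π s a * M.Q Phat π (fun x y => I x y * ℓ x y / u x y) s a ≤ (M.L : ℝ) ∧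
      M.occState Phat π s * M.V Phat π (fun x y => I x y * ℓ x y / u x y) s ≤ (M.L : ℝ) ∧
      M.occ Phat π s a *
          (M.Q Phat π (fun x y => I x y * ℓ x y / u x y) s a -
            M.V Phat π (fun x y => I x y * ℓ x y / u x y) s)
        ∈ Set.Icc (-(M.L : ℝ)) (M.L : ℝ) := by
  set ℓh : M.State → M.Action → ℝ := fun x y => I x y * ℓ x y / u x y with hℓhdef
  have hInn : ∀ x y, 0 ≤ I x y := by
    intro x y; rcases hI01 x y with h | h <;> rw [h] <;> norm_num
  have hIle : ∀ x y, I x y ≤ 1 := by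
    intro x y; rcases hI01 x y with h | h <;> rw [h] <;> norm_num
  have hℓhnn : ∀ x y, 0 ≤ ℓh x y := fun x y =>
    div_nonneg (mul_nonneg (hInn x y) (hℓ x y).1) (hu x y).1.le
  have hoccnn : ∀ x y, 0 ≤ M.occ Phat π x y := fun x y =>
    aux_occ_nonneg hPhat.1 hπ.1 x y
  have hoccSnn : ∀ x, 0 ≤ M.occState Phat π x := fun x =>
    aux_occState_nonneg hPhat.1 hπ.1 x
  have valnn : ∀ n x, 0 ≤ M.valAux Phat π ℓh n x :=
    aux_valAux_nonneg hπ.1 hPhat.1 hℓhnn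
  have hVnn : ∀ x, 0 ≤ M.V Phat π ℓh x := fun x => by
    rw [LayeredMDP.V]; exact valnn _ x
  have hql : ∀ x y, M.occ Phat π x y * ℓh x y ≤ I x y := by
    intro x y
    obtain ⟨hup, hle⟩ := hu x y
    rcases hI01 x y with h | h
    · simp [hℓhdef, h]
    · have h1 : M.occ Phat π x y * ℓ x y ≤ u x y := by
        calc M.occ Phat π x y * ℓ x y ≤ M.occ Phat π x y * 1 :=
              mul_le_mul_of_nonneg_left (hℓ x y).2 (hoccnn x y)
          _ = M.occ Phat π x y := mul_one _
          _ ≤ u x y := hle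
      have h2 : M.occ Phat π x y * ℓh x y = M.occ Phat π x y * ℓ x y / u x y := by
        simp [hℓhdef, h, mul_div_assoc]
      rw [h2, h, div_le_one hup]
      exact h1
  have hsum' : ∀ h, h < M.L →
      ∑ x ∈ Finset.univ.filter (fun x => M.layer x = h),
        ∑ y, M.occ Phat π x y * ℓh x y ≤ 1 := by
    intro h hh
    refine le_trans ?_ (hIsum h hh)
    exact Finset.sum_le_sum fun x _ => Finset.sum_le_sum fun y _ => hql x y
  have hlayerB := aux_layer_bound (P := Phat) (π := π) hPhat hπ hℓhnn hsum'
  intro s a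
  have hsL := M.layer_le s
  have hqV : M.occState Phat π s * M.V Phat π ℓh s ≤ (M.L : ℝ) := by
    have hm : M.L - M.layer s ≤ M.L := Nat.sub_le _ _
    have hmem : s ∈ Finset.univ.filter
        (fun x => M.layer x = M.L - (M.L - M.layer s)) := by
      simp only [Finset.mem_filter, Finset.mem_univ, true_and]
      omega
    calc M.occState Phat π s * M.V Phat π ℓh s
        = M.occState Phat π s * M.valAux Phat π ℓh (M.L - M.layer s) s := rfl
      _ ≤ ∑ x ∈ Finset.univ.filter (fun x => M.layer x = M.L - (M.L - M.layer s)),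
            M.occState Phat π x * M.valAux Phat π ℓh (M.L - M.layer s) x :=
          Finset.single_le_sum (fun x _ => mul_nonneg (hoccSnn x) (valnn _ x)) hmem
      _ ≤ ((M.L - M.layer s : ℕ) : ℝ) := hlayerB _ hm
      _ ≤ (M.L : ℝ) := Nat.cast_le.mpr (Nat.sub_le _ _)
  have hqQ : M.occ Phat π s a * M.Q Phat π ℓh s a ≤ (M.L : ℝ) := by
    by_cases hc : M.layer s < M.L
    · rw [LayeredMDP.Q, if_pos hc, mul_add, Finset.mul_sum]
      have hA : M.occ Phat π s a * ℓh s a ≤ 1 := le_trans (hql s a) (hIle s a)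
      have hB : ∑ s', M.occ Phat π s a * (Phat s a s' * M.V Phat π ℓh s')
          ≤ ((M.L - (M.layer s + 1) : ℕ) : ℝ) := by
        have hfil : ∑ s', M.occ Phat π s a * (Phat s a s' * M.V Phat π ℓh s')
            = ∑ s' ∈ Finset.univ.filter (fun s' => M.layer s' = M.layer s + 1),
                M.occ Phat π s a * (Phat s a s' * M.V Phat π ℓh s') := by
          refine (Finset.sum_filter_of_ne ?_).symm
          intro s' _ hne
          have hz : Phat s a s' ≠ 0 := by
            intro hzz; exact hne (by rw [hzz, zero_mul, mul_zero])
          exact hPhat.2.1 s a s' hz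
        have hLL : M.L - (M.L - (M.layer s + 1)) = M.layer s + 1 := by omega
        have hkey := hlayerB (M.L - (M.layer s + 1)) (Nat.sub_le _ _)
        rw [hLL] at hkey
        rw [hfil]
        refine le_trans (Finset.sum_le_sum ?_) hkey
        intro s' hs'
        rw [Finset.mem_filter] at hs'
        have h1 : 1 ≤ M.layer s' := by omega
        have h2 : M.occ Phat π s a * Phat s a s' ≤ M.occState Phat π s' :=
          aux_occ_mul_le hPhat.1 hπ.1 hPhat.2.1 hπ.2 s a s' h1
        have hV' : M.V Phat π ℓh s'
            = M.valAux Phat π ℓh (M.L - (M.layer s + 1)) s' := by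
          rw [LayeredMDP.V, hs'.2]
        rw [← hV', ← mul_assoc]
        exact mul_le_mul_of_nonneg_right h2 (hVnn s')
      have hcast : (1 : ℝ) + ((M.L - (M.layer s + 1) : ℕ) : ℝ) ≤ (M.L : ℝ) := by
        have h4 : 1 + (M.L - (M.layer s + 1)) ≤ M.L := by omega
        exact_mod_cast h4
      linarith
    · rw [LayeredMDP.Q, if_neg hc, mul_zero]
      exact Nat.cast_nonneg _
  have hQnn : 0 ≤ M.Q Phat π ℓh s a := by
    rw [LayeredMDP.Q]
    split
    · exact add_nonneg (hℓhnn s a)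
        (Finset.sum_nonneg fun s' _ => mul_nonneg (hPhat.1 s a s') (hVnn s'))
    · exact le_refl 0
  have hqQnn : 0 ≤ M.occ Phat π s a * M.Q Phat π ℓh s a :=
    mul_nonneg (hoccnn s a) hQnn
  have hoccle : M.occ Phat π s a ≤ M.occState Phat π s :=
    Finset.single_le_sum (fun b _ => hoccnn s b) (Finset.mem_univ a)
  have hqVnn : 0 ≤ M.occ Phat π s a * M.V Phat π ℓh s :=
    mul_nonneg (hoccnn s a) (hVnn s)
  have hqV' : M.occ Phat π s a * M.V Phat π ℓh s ≤ (M.L : ℝ) :=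
    le_trans (mul_le_mul_of_nonneg_right hoccle (hVnn s)) hqV
  refine ⟨hqQ, hqV, Set.mem_Icc.mpr ⟨?_, ?_⟩⟩
  · rw [mul_sub]
    linarith
  · rw [mul_sub]
    linarith
end

section
/- Let S be a finite nonempty set and A a finite set, let L ≥ 1 be an integer, and let q, u : S×A → ℝ satisfy 0 ≤ q(s,a) ≤ u(s,a) and u(s) := Σ_{a∈A} u(s,a) > 0 for every s. Let I : S×A → {0,1} satisfy Σ_{(s,a)∈S×A} I(s,a) ≤ L, let ℓ : S×A → [0,1], let b : S → ℝ satisfy 0 ≤ b(s) ≤ 4L/u(s), and let γ : S×A → ℝ satisfy γ(s,a) ≥ 256·L²·|S| for all (s,a). Then Σ_{(s,a)∈S×A} (I(s,a)·ℓ(s,a)/u(s,a) − b(s))² · q(s,a)²/γ(s,a) ≤ 1/8. -/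
/-!
After multiplying by `q(s,a)`, each term splits as `x - y` with `x = I ℓ q/u ∈ [0, I]` and
`y = b q ∈ [0, b u(s,a)]`; both are nonnegative, so `(x - y)² ≤ x² + y² ≤ I + (b u(s,a))²`.
Summing, the indicators contribute at most `L`, and for each state
`Σ_a (b u(s,a))² ≤ (b u(s))² ≤ 16 L²`, so the whole sum is at most
`(L + 16 L² |S|) / (256 L² |S|) ≤ 17/256`.
-/

open Finset

lemma sq_sub_le_sq_add_sq_of_nonneg {x y : ℝ} (hx : 0 ≤ x) (hy : 0 ≤ y) :
    (x - y) ^ 2 ≤ x ^ 2 + y ^ 2 := by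
  nlinarith [mul_nonneg hx hy]

lemma sq_importance_weighted_sub_mul_sq_le {I ℓ q u b : ℝ} (hI : I ∈ Set.Icc (0 : ℝ) 1)
    (hℓ : ℓ ∈ Set.Icc (0 : ℝ) 1) (hq : 0 ≤ q) (hqu : q ≤ u) (hb : 0 ≤ b) :
    (I * ℓ / u - b) ^ 2 * q ^ 2 ≤ I + (b * u) ^ 2 := by
  obtain ⟨hI0, hI1⟩ := hI
  obtain ⟨hℓ0, hℓ1⟩ := hℓ
  have hu : 0 ≤ u := hq.trans hqu
  have hratio : q / u ≤ 1 := div_le_one_of_le₀ hqu hu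
  have hx0 : 0 ≤ I * (ℓ * (q / u)) := mul_nonneg hI0 (mul_nonneg hℓ0 (div_nonneg hq hu))
  have hxI : I * (ℓ * (q / u)) ≤ I :=
    mul_le_of_le_one_right hI0 (mul_le_one₀ hℓ1 (div_nonneg hq hu) hratio)
  have hy : b * q ≤ b * u := mul_le_mul_of_nonneg_left hqu hb
  calc (I * ℓ / u - b) ^ 2 * q ^ 2 = (I * (ℓ * (q / u)) - b * q) ^ 2 := by ring
    _ ≤ (I * (ℓ * (q / u))) ^ 2 + (b * q) ^ 2 :=
        sq_sub_le_sq_add_sq_of_nonneg hx0 (mul_nonneg hb hq)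
    _ ≤ I + (b * u) ^ 2 :=
        add_le_add ((pow_le_pow_left₀ hx0 hxI 2).trans (pow_le_of_le_one hI0 hI1 two_ne_zero))
          (pow_le_pow_left₀ (mul_nonneg hb hq) hy 2)

lemma sum_sq_mul_le_sq {A : Type*} [Fintype A] {u : A → ℝ} {b c : ℝ} (hu : ∀ a, 0 ≤ u a)
    (hb : 0 ≤ b) (hbc : b * ∑ a, u a ≤ c) : ∑ a, (b * u a) ^ 2 ≤ c ^ 2 :=
  calc ∑ a, (b * u a) ^ 2 ≤ (∑ a, b * u a) ^ 2 :=
        sum_sq_le_sq_sum_of_nonneg fun a _ => mul_nonneg hb (hu a)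
    _ = (b * ∑ a, u a) ^ 2 := by rw [mul_sum]
    _ ≤ c ^ 2 := pow_le_pow_left₀ (mul_nonneg hb (sum_nonneg fun a _ => hu a)) hbc 2

/-- **Multiplicative-stability verification inequality (Lemma D.7).**
Let `S` be a finite nonempty set, `A` a finite set, `L ≥ 1` an integer, and
`0 ≤ q(s,a) ≤ u(s,a)` with `u(s) = Σ_a u(s,a) > 0`.  Let `I : S×A → {0,1}`
with `Σ I ≤ L`, `ℓ : S×A → [0,1]`, `0 ≤ b(s) ≤ 4L/u(s)`, and
`γ(s,a) ≥ 256·L²·|S|`.  Then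
`Σ_{s,a} (I(s,a)·ℓ(s,a)/u(s,a) − b(s))² · q(s,a)² / γ(s,a) ≤ 1/8`. -/
theorem multiplicative_stability_verification
    (S A : Type) [Fintype S] [Nonempty S] [Fintype A]
    (L : ℕ) (hL : 1 ≤ L)
    (q u : S → A → ℝ)
    (hqu : ∀ s a, 0 ≤ q s a ∧ q s a ≤ u s a)
    (husum : ∀ s : S, 0 < ∑ a, u s a)
    (I : S → A → ℝ) (hI : ∀ s a, I s a = 0 ∨ I s a = 1)
    (hIsum : ∑ s, ∑ a, I s a ≤ (L : ℝ))
    (ℓ : S → A → ℝ) (hℓ : ∀ s a, ℓ s a ∈ Set.Icc (0 : ℝ) 1)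
    (b : S → ℝ) (hb : ∀ s, 0 ≤ b s ∧ b s ≤ 4 * (L : ℝ) / ∑ a, u s a)
    (γ : S → A → ℝ) (hγ : ∀ s a, 256 * (L : ℝ) ^ 2 * (Fintype.card S : ℝ) ≤ γ s a) :
    ∑ s, ∑ a, (I s a * ℓ s a / u s a - b s) ^ 2 * (q s a) ^ 2 / γ s a ≤ 1 / 8 := by
  have hS : (1 : ℝ) ≤ Fintype.card S := by exact_mod_cast Fintype.card_pos
  have hL1 : (1 : ℝ) ≤ L := by exact_mod_cast hL
  set G := 256 * (L : ℝ) ^ 2 * (Fintype.card S : ℝ)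
  have hG : 0 < G := by positivity
  have hI01 : ∀ s a, I s a ∈ Set.Icc (0 : ℝ) 1 := fun s a => by
    rcases hI s a with h | h <;> simp [h]
  have hbonus : ∀ s, ∑ a, (b s * u s a) ^ 2 ≤ (4 * L) ^ 2 := fun s =>
    sum_sq_mul_le_sq (fun a => (hqu s a).1.trans (hqu s a).2) (hb s).1
      ((le_div_iff₀ (husum s)).1 (hb s).2)
  calc ∑ s, ∑ a, (I s a * ℓ s a / u s a - b s) ^ 2 * q s a ^ 2 / γ s a
      ≤ ∑ s, ∑ a, (I s a + (b s * u s a) ^ 2) / G := by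
        refine sum_le_sum fun s _ => sum_le_sum fun a _ => ?_
        exact div_le_div₀ (add_nonneg (hI01 s a).1 (sq_nonneg _))
          (sq_importance_weighted_sub_mul_sq_le (hI01 s a) (hℓ s a) (hqu s a).1 (hqu s a).2
            (hb s).1) hG (hγ s a)
    _ = (∑ s, ∑ a, I s a + ∑ s, ∑ a, (b s * u s a) ^ 2) / G := by
        simp only [add_div, sum_add_distrib, sum_div]
    _ ≤ (L + ∑ _s : S, (4 * (L : ℝ)) ^ 2) / G := by gcongr with s; exact hbonus s
    _ = (L + 16 * L ^ 2 * Fintype.card S) / G := by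
        rw [sum_const, card_univ, nsmul_eq_mul]; ring
    _ ≤ 1 / 8 := by rw [div_le_iff₀ hG]; nlinarith
end
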